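/- arXiv:1504.06031 — 7 statements merged into one kernel-verified Lean document; each statement's English description precedes it below -/
import Mathlib

section
/- Deterministic verification identity: Let T > 0, p ≥ 2 real, β := 1/(p−1), let μ be a finite Borel measure on [0,T] with no atoms, let φ : [0,T] → [0,∞) be bounded measurable, and ρ ≥ 0. Suppose u : [0,T] → [0,∞) is bounded, measurable and satisfies u(t) = ρ + ∫_t^T φ(s) ds − (1/β)·∫_{(t,T]} u(s)^{1+β} μ(ds) for all t ∈ [0,T]. Let x₀ ≥ 0 and let ξ : [0,T] → (−∞,0] be measurable with ∫_{[0,T]} |ξ|^p dμ < ∞ and such that X^ξ_t := x₀ + ∫_{[0,t]} ξ dμ ≥ 0 for all t ∈ [0,T]. Then ∫_{[0,T]} |ξ_t|^p μ(dt) + ∫_0^T φ(t)·(X^ξ_t)^p dt + ρ·(X^ξ_T)^p = x₀^p·u(0) + ∫_{[0,T]} Φ_p(|ξ_t|, X^ξ_t·u(t)^β) μ(dt), where Φ_p(x,y) := x^p − p·y^{p−1}·x + (p−1)·y^p. -/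
open MeasureTheory Set
open scoped Classical

private lemma aux_bdd_integrable {m : Measure ℝ} [IsFiniteMeasure m] {f : ℝ → ℝ}
    (hm : AEStronglyMeasurable f m) {C : ℝ} (h : ∀ᵐ x ∂m, |f x| ≤ C) : Integrable f m :=
  Integrable.mono' (integrable_const C) hm (by simpa [Real.norm_eq_abs] using h)

private lemma aux_swap {m₁ m₂ : Measure ℝ} [IsFiniteMeasure m₁] [IsFiniteMeasure m₂]
    {f g : ℝ → ℝ} (hfm : Measurable f) (hgm : Measurable g)
    (hf : Integrable f m₁) {C : ℝ} (hg : ∀ᵐ s ∂m₂, |g s| ≤ C)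
    {S : Set (ℝ × ℝ)} (hS : MeasurableSet S) :
    ∫ t, ∫ s, (if (t, s) ∈ S then f t * g s else 0) ∂m₂ ∂m₁
      = ∫ s, ∫ t, (if (t, s) ∈ S then f t * g s else 0) ∂m₁ ∂m₂ := by
  have hFm : Measurable (fun z : ℝ × ℝ => if z ∈ S then f z.1 * g z.2 else 0) :=
    Measurable.ite hS ((hfm.comp measurable_fst).mul (hgm.comp measurable_snd)) measurable_const
  have hbnd : Integrable (fun z : ℝ × ℝ => |f z.1| * C) (m₁.prod m₂) :=
    hf.abs.mul_prod (integrable_const C)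
  have hae : ∀ᵐ z : ℝ × ℝ ∂(m₁.prod m₂), |g z.2| ≤ C := by
    rw [ae_iff] at hg ⊢
    have hset : {z : ℝ × ℝ | ¬ |g z.2| ≤ C} = univ ×ˢ {s | ¬ |g s| ≤ C} := by
      ext z; simp [Set.mem_prod]
    rw [hset, Measure.prod_prod, hg, mul_zero]
  have hF : Integrable (Function.uncurry fun t s => if (t, s) ∈ S then f t * g s else 0)
      (m₁.prod m₂) := by
    refine hbnd.mono' ?_ ?_
    · exact hFm.aestronglyMeasurable
    · filter_upwards [hae] with z hz
      by_cases h : z ∈ S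
      · simp only [Function.uncurry, h, if_pos, Real.norm_eq_abs, abs_mul]
        exact mul_le_mul_of_nonneg_left hz (abs_nonneg _)
      · simp only [Function.uncurry]
        rw [if_neg h, Real.norm_eq_abs, abs_zero]
        exact mul_nonneg (abs_nonneg _) (le_trans (abs_nonneg _) hz)
  exact integral_integral_swap hF

/-- Deterministic verification identity for the liquidation cost functional:
the total cost of a nonpositive strategy `ξ` with nonnegative inventory `X`
decomposes as `x₀^p·u(0)` plus the integral of
`Φ_p(|ξ_t|, X_t·u(t)^β)` against the atomless measure `μ`. -/
theorem verification_identity (T p β : ℝ) (hT : 0 < T) (hp : 2 ≤ p) (hβ : β = 1 / (p - 1))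
    (μ : Measure ℝ) [IsFiniteMeasure μ] [NullSingletonClass μ] (hμsupp : μ (Icc (0:ℝ) T)ᶜ = 0)
    (φ : ℝ → ℝ) (hφm : Measurable φ) (hφ0 : ∀ t ∈ Icc (0:ℝ) T, 0 ≤ φ t)
    (Cφ : ℝ) (hφb : ∀ t ∈ Icc (0:ℝ) T, φ t ≤ Cφ)
    (ρ : ℝ) (hρ : 0 ≤ ρ)
    (u : ℝ → ℝ) (hum : Measurable u) (hu0 : ∀ t ∈ Icc (0:ℝ) T, 0 ≤ u t)
    (Cu : ℝ) (hub : ∀ t ∈ Icc (0:ℝ) T, u t ≤ Cu)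
    (hu : ∀ t ∈ Icc (0:ℝ) T,
      u t = ρ + (∫ s in t..T, φ s) - (1 / β) * ∫ s in Ioc t T, u s ^ (1 + β) ∂μ)
    (x₀ : ℝ) (hx₀ : 0 ≤ x₀)
    (ξ : ℝ → ℝ) (hξm : Measurable ξ) (hξ0 : ∀ t ∈ Icc (0:ℝ) T, ξ t ≤ 0)
    (hξint : Integrable (fun t => |ξ t| ^ p) (μ.restrict (Icc (0:ℝ) T)))
    (X : ℝ → ℝ) (hX : ∀ t, X t = x₀ + ∫ s in Icc (0:ℝ) t, ξ s ∂μ)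
    (hXpos : ∀ t ∈ Icc (0:ℝ) T, 0 ≤ X t) :
    (∫ t in Icc (0:ℝ) T, |ξ t| ^ p ∂μ) + (∫ t in (0:ℝ)..T, φ t * X t ^ p) + ρ * X T ^ p
      = x₀ ^ p * u 0 +
        ∫ t in Icc (0:ℝ) T,
          (|ξ t| ^ p - p * (X t * u t ^ β) ^ (p - 1) * |ξ t|
            + (p - 1) * (X t * u t ^ β) ^ p) ∂μ := by
  have hpm1 : (0:ℝ) < p - 1 := by linarith
  have hp0 : (0:ℝ) < p := by linarith
  have hβpos : 0 < β := by rw [hβ]; positivity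
  have h1β : 1 / β = p - 1 := by rw [hβ, one_div_one_div]
  have haemem : ∀ᵐ t ∂μ, t ∈ Icc (0:ℝ) T := by
    rw [ae_iff]
    exact hμsupp
  have hμr : μ.restrict (Icc (0:ℝ) T) = μ := Measure.restrict_eq_self_of_ae_mem haemem
  have hT0 : (0:ℝ) ∈ Icc (0:ℝ) T := ⟨le_refl _, hT.le⟩
  have hTT : T ∈ Icc (0:ℝ) T := ⟨hT.le, le_refl _⟩
  have hCu0 : 0 ≤ Cu := le_trans (hu0 0 hT0) (hub 0 hT0)
  have hCφ0 : 0 ≤ Cφ := le_trans (hφ0 0 hT0) (hφb 0 hT0)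
  have hrpm : ∀ q : ℝ, 0 ≤ q → Measurable (fun x : ℝ => x ^ q) := fun q hq =>
    (Real.continuous_rpow_const hq).measurable
  -- ξ is integrable
  have hξi : Integrable ξ μ := by
    have h1 : Integrable (fun t => 1 + |ξ t| ^ p) μ := by
      have h2 := hξint; rw [hμr] at h2
      exact (integrable_const 1).add h2
    refine h1.mono' hξm.aestronglyMeasurable (Filter.Eventually.of_forall fun t => ?_)
    rw [Real.norm_eq_abs]
    rcases le_or_gt (|ξ t|) 1 with h | h
    · have : (0:ℝ) ≤ |ξ t| ^ p := Real.rpow_nonneg (abs_nonneg _) _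
      linarith
    · have h3 : |ξ t| ≤ |ξ t| ^ p := by
        calc |ξ t| = |ξ t| ^ (1:ℝ) := (Real.rpow_one _).symm
          _ ≤ |ξ t| ^ p := Real.rpow_le_rpow_of_exponent_le h.le (by linarith)
      linarith
  have hξae : ∀ᵐ t ∂μ, ξ t ≤ 0 := haemem.mono fun t ht => hξ0 t ht
  -- basic facts about X
  have hX0 : X 0 = x₀ := by
    rw [hX 0, Icc_self]
    rw [Measure.restrict_eq_zero.mpr (measure_singleton 0), integral_zero_measure, add_zero]
  have hXint : ∀ t, X t = x₀ + ∫ s in (0:ℝ)..t, ξ s ∂μ := by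
    intro t
    rcases le_or_gt 0 t with h | h
    · rw [hX t, intervalIntegral.integral_of_le h, integral_Icc_eq_integral_Ioc]
    · have h1 : Icc (0:ℝ) t = ∅ := Icc_eq_empty_of_lt h
      have h2 : μ (Ioc t 0) = 0 := by
        have hsub : Ioc t 0 ⊆ {0} ∪ (Icc 0 T)ᶜ := by
          intro x hx
          rcases hx.2.eq_or_lt with h | h
          · exact Or.inl (by simp [h])
          · refine Or.inr ?_
            simp only [mem_compl_iff, mem_Icc, not_and_or, not_le]
            exact Or.inl h
        exact measure_mono_null hsub (measure_union_null (measure_singleton 0) hμsupp)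
      rw [hX t, h1, intervalIntegral.integral_of_ge h.le,
        Measure.restrict_eq_zero.mpr h2]
      simp
  have hXcont : Continuous X := by
    have := intervalIntegral.continuous_primitive (fun a b => hξi.intervalIntegrable) 0
    have heq : X = fun t => x₀ + ∫ s in (0:ℝ)..t, ξ s ∂μ := funext hXint
    rw [heq]
    exact continuous_const.add this
  have hXm : Measurable X := hXcont.measurable
  have hXdiff : ∀ a b : ℝ, a ≤ b → X b - X a = ∫ s in Ioc a b, ξ s ∂μ := by
    intro a b hab
    have h1 := intervalIntegral.integral_add_adjacent_intervals
      (hξi.intervalIntegrable (a := 0) (b := a)) (hξi.intervalIntegrable (a := a) (b := b))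
    rw [hXint a, hXint b, ← intervalIntegral.integral_of_le hab, ← h1]
    ring
  have hXanti : Antitone X := by
    intro a b hab
    have h1 := hXdiff a b hab
    have h2 : ∫ s in Ioc a b, ξ s ∂μ ≤ 0 :=
      integral_nonpos_of_ae (ae_restrict_of_ae hξae)
    linarith
  have hXle : ∀ t, X t ≤ x₀ := by
    intro t
    rcases le_or_gt 0 t with h | h
    · have := hXanti h; rw [hX0] at this; exact this
    · rw [hX t, Icc_eq_empty_of_lt h]; simp
  -- the integrand g
  set g : ℝ → ℝ := fun t => p * X t ^ (p - 1) * ξ t with hgdef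
  have hgm : Measurable g := (measurable_const.mul ((hrpm (p - 1) (by linarith)).comp hXm)).mul hξm
  have hgi : Integrable g μ := by
    refine (hξi.abs.const_mul (p * x₀ ^ (p - 1))).mono' hgm.aestronglyMeasurable ?_
    filter_upwards [haemem] with t ht
    have h1 : 0 ≤ X t := hXpos t ht
    have h2 : X t ^ (p - 1) ≤ x₀ ^ (p - 1) := Real.rpow_le_rpow h1 (hXle t) (by linarith)
    have h3 : 0 ≤ X t ^ (p - 1) := Real.rpow_nonneg h1 _
    rw [Real.norm_eq_abs, hgdef]
    simp only [abs_mul, abs_of_nonneg hp0.le, abs_of_nonneg h3]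
    exact mul_le_mul_of_nonneg_right (mul_le_mul_of_nonneg_left h2 hp0.le) (abs_nonneg _)
  -- Lemma A: level-set integral of ξ
  have lemA : ∀ s ∈ Icc (0:ℝ) T, ∀ y : ℝ, 0 < y → y ≤ x₀ →
      ∫ t in {t | y < X t} ∩ Icc 0 s, ξ t ∂μ = max y (X s) - x₀ := by
    intro s hs y hy hyx
    rcases lt_or_ge y (X s) with hys | hsy
    · have hset : {t | y < X t} ∩ Icc 0 s = Icc 0 s := by
        rw [inter_eq_right]
        intro t ht
        exact lt_of_lt_of_le hys (hXanti ht.2)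
      rw [hset, max_eq_right hys.le]
      have := hX s
      linarith [this]
    · set Sy := Icc 0 s ∩ X ⁻¹' (Iic y) with hSydef
      have hcl : IsClosed Sy := isClosed_Icc.inter (isClosed_Iic.preimage hXcont)
      have hne : Sy.Nonempty := ⟨s, ⟨⟨hs.1, le_refl s⟩, hsy⟩⟩
      have hbdd : BddBelow Sy := ⟨0, fun x hx => hx.1.1⟩
      set τ := sInf Sy with hτdef
      have hτmem : τ ∈ Sy := hcl.csInf_mem hne hbdd
      have hτs : τ ≤ s := hτmem.1.2
      have hτ0 : 0 ≤ τ := hτmem.1.1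
      have hXτy : X τ ≤ y := hτmem.2
      have hAset : {t | y < X t} ∩ Icc 0 s = Ico 0 τ := by
        ext t
        constructor
        · rintro ⟨hty, ht0, hts⟩
          refine ⟨ht0, ?_⟩
          by_contra hcon
          push_neg at hcon
          have := hXanti hcon
          simp only [mem_setOf_eq] at hty
          linarith
        · rintro ⟨ht0, htτ⟩
          have hts : t ≤ s := le_trans htτ.le hτs
          refine ⟨?_, ht0, hts⟩
          by_contra hcon
          simp only [mem_setOf_eq, not_lt] at hcon
          have : t ∈ Sy := ⟨⟨ht0, hts⟩, hcon⟩
          exact absurd (csInf_le hbdd this) (not_le.mpr htτ)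
      have hXτ : X τ = y := by
        rcases hτ0.eq_or_lt with h0 | h0
        · have h1 : X τ = x₀ := by rw [← h0, hX0]
          linarith
        · have htend : Filter.Tendsto X (nhdsWithin τ (Iio τ)) (nhds (X τ)) :=
            (hXcont.tendsto τ).mono_left nhdsWithin_le_nhds
          have hev : ∀ᶠ t in nhdsWithin τ (Iio τ), y ≤ X t := by
            filter_upwards [Ioo_mem_nhdsLT_of_mem (⟨h0, le_refl τ⟩ : τ ∈ Ioc 0 τ)] with t ht
            have : t ∈ {t | y < X t} ∩ Icc 0 s := hAset ▸ (⟨ht.1.le, ht.2⟩ : t ∈ Ico 0 τ)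
            exact this.1.le
          have := ge_of_tendsto htend hev
          linarith
      have hIco : ∫ t in Ico 0 τ, ξ t ∂μ = ∫ t in Icc 0 τ, ξ t ∂μ :=
        (integral_Icc_eq_integral_Ico).symm
      rw [hAset, hIco, max_eq_left hsy]
      have h2 := hX τ
      linarith
  -- a small FTC helper on Ioc
  have hIocInt : ∀ a b : ℝ, 0 ≤ a → a ≤ b → ∀ q : ℝ, -1 < q →
      ∫ y in Ioc a b, y ^ q = (b ^ (q + 1) - a ^ (q + 1)) / (q + 1) := by
    intro a b ha hab q hq
    rw [← intervalIntegral.integral_of_le hab, integral_rpow (Or.inl hq)]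
  -- layer-cake scalar identity
  have hL2 : ∀ x : ℝ, 0 ≤ x → x ≤ x₀ →
      (∫ y in Ioc (0:ℝ) x₀, (if y < x then y ^ (p - 2) else 0)) = x ^ (p - 1) / (p - 1) := by
    intro x hx hxx
    have h1 : (fun y => if y < x then y ^ (p - 2) else 0)
        = Set.indicator (Iio x) (fun y : ℝ => y ^ (p - 2)) := by
      funext y
      rw [Set.indicator_apply]
      simp [mem_Iio]
    rw [h1, setIntegral_indicator measurableSet_Iio]
    have h2 : Ioc (0:ℝ) x₀ ∩ Iio x = Ioo 0 x := by
      ext y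
      constructor
      · rintro ⟨⟨h1', h2'⟩, h3'⟩
        exact ⟨h1', h3'⟩
      · rintro ⟨h1', h2'⟩
        exact ⟨⟨h1', le_trans h2'.le hxx⟩, h2'⟩
    rw [h2]
    have h3 : ∫ y in Ioo (0:ℝ) x, y ^ (p - 2) = ∫ y in Ioc (0:ℝ) x, y ^ (p - 2) :=
      (integral_Ioc_eq_integral_Ioo).symm
    rw [h3, hIocInt 0 x le_rfl hx (p - 2) (by linarith)]
    rw [show p - 2 + 1 = p - 1 by ring, Real.zero_rpow (by linarith : p - 1 ≠ 0), sub_zero]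
  -- the chain rule
  have hCR : ∀ s ∈ Icc (0:ℝ) T, ∫ t in Icc 0 s, g t ∂μ = X s ^ p - x₀ ^ p := by
    intro s hs
    haveI hfin : IsFiniteMeasure (volume.restrict (Ioc (0:ℝ) x₀)) := by
      constructor
      rw [Measure.restrict_apply_univ, Real.volume_Ioc]
      exact ENNReal.ofReal_lt_top
    set ν := volume.restrict (Ioc (0:ℝ) x₀) with hνdef
    set S : Set (ℝ × ℝ) := {z | z.2 < X z.1} with hSdef
    have hSm : MeasurableSet S := measurableSet_lt measurable_snd (hXm.comp measurable_fst)
    set G : ℝ → ℝ := fun y => p * (p - 1) * y ^ (p - 2) with hGdef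
    have hGm : Measurable G := ((hrpm (p - 2) (by linarith)).comp measurable_id).const_mul _
    have step1 : ∫ t in Icc 0 s, g t ∂μ
        = ∫ t, (∫ y, (if (t, y) ∈ S then ξ t * G y else 0) ∂ν) ∂(μ.restrict (Icc 0 s)) := by
      refine integral_congr_ae ?_
      filter_upwards [ae_restrict_mem measurableSet_Icc] with t ht
      have ht' : t ∈ Icc (0:ℝ) T := ⟨ht.1, le_trans ht.2 hs.2⟩
      have hxt0 : 0 ≤ X t := hXpos t ht'
      have h4 : (fun y => (if (t, y) ∈ S then ξ t * G y else 0))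
          = fun y => (ξ t * (p * (p - 1))) * (if y < X t then y ^ (p - 2) else 0) := by
        funext y
        by_cases h : y < X t
        · have h' : (t, y) ∈ S := by simpa [hSdef] using h
          rw [if_pos h', if_pos h, hGdef]; ring
        · have h' : (t, y) ∉ S := by simpa [hSdef] using h
          rw [if_neg h', if_neg h, mul_zero]
      rw [h4, integral_const_mul, hL2 (X t) hxt0 (hXle t), hgdef]
      field_simp
    have hbound : ∀ᵐ y ∂ν, |G y| ≤ p * (p - 1) * x₀ ^ (p - 2) := by
      filter_upwards [ae_restrict_mem measurableSet_Ioc] with y hy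
      have h5 : y ^ (p - 2) ≤ x₀ ^ (p - 2) := Real.rpow_le_rpow hy.1.le hy.2 (by linarith)
      have h6 : 0 ≤ y ^ (p - 2) := Real.rpow_nonneg hy.1.le _
      rw [hGdef, abs_mul, abs_of_nonneg (by positivity : (0:ℝ) ≤ p * (p - 1)),
        abs_of_nonneg h6]
      exact mul_le_mul_of_nonneg_left h5 (by positivity)
    have step2 := aux_swap (m₁ := μ.restrict (Icc 0 s)) (m₂ := ν) hξm hGm
      (hξi.restrict) hbound hSm
    have step3 : ∫ y, (∫ t, (if (t, y) ∈ S then ξ t * G y else 0) ∂(μ.restrict (Icc 0 s))) ∂ν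
        = ∫ y in Ioc (0:ℝ) x₀, p * (p - 1) * y ^ (p - 2) * (max y (X s) - x₀) := by
      refine integral_congr_ae ?_
      filter_upwards [ae_restrict_mem measurableSet_Ioc] with y hy
      have hsetm : MeasurableSet {t | y < X t} := measurableSet_lt measurable_const hXm
      have h4 : (fun t => (if (t, y) ∈ S then ξ t * G y else 0))
          = fun t => G y * Set.indicator {t | y < X t} ξ t := by
        funext t
        rw [Set.indicator_apply]
        by_cases h : y < X t
        · have h' : (t, y) ∈ S := by simpa [hSdef] using h
          have h'' : t ∈ {t | y < X t} := h
          rw [if_pos h', if_pos h'']; ring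
        · have h' : (t, y) ∉ S := by simpa [hSdef] using h
          have h'' : t ∉ {t | y < X t} := h
          rw [if_neg h', if_neg h'', mul_zero]
      rw [h4, integral_const_mul, integral_indicator hsetm,
        Measure.restrict_restrict hsetm, lemA s hs y hy.1 hy.2, hGdef]
    have hc0 : 0 ≤ X s := hXpos s hs
    have hcx : X s ≤ x₀ := hXle s
    set c := X s with hcdef
    have step4 : ∫ y in Ioc (0:ℝ) x₀, p * (p - 1) * y ^ (p - 2) * (max y c - x₀)
        = c ^ p - x₀ ^ p := by
      have hsplit : Ioc (0:ℝ) x₀ = Ioc 0 c ∪ Ioc c x₀ := (Ioc_union_Ioc_eq_Ioc hc0 hcx).symm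
      have hmeas1 : Measurable fun y : ℝ => p * (p - 1) * y ^ (p - 2) * (max y c - x₀) :=
        (((hrpm (p - 2) (by linarith)).comp measurable_id).const_mul _).mul
          ((measurable_id.max measurable_const).sub measurable_const)
      have hint : ∀ b1 b2 : ℝ, 0 ≤ b1 → b2 ≤ x₀ →
          IntegrableOn (fun y : ℝ => p * (p - 1) * y ^ (p - 2) * (max y c - x₀)) (Ioc b1 b2)
            volume := by
        intro b1 b2 hb1 hb2
        refine aux_bdd_integrable hmeas1.aestronglyMeasurable
          (C := p * (p - 1) * x₀ ^ (p - 2) * (x₀ + x₀)) ?_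
        filter_upwards [ae_restrict_mem measurableSet_Ioc] with y hy
        have hy0 : 0 < y := lt_of_le_of_lt hb1 hy.1
        have hyx : y ≤ x₀ := le_trans hy.2 hb2
        have h5 : y ^ (p - 2) ≤ x₀ ^ (p - 2) := Real.rpow_le_rpow hy0.le hyx (by linarith)
        have h6 : 0 ≤ y ^ (p - 2) := Real.rpow_nonneg hy0.le _
        have h7 : |max y c - x₀| ≤ x₀ + x₀ := by
          rw [abs_le]
          constructor
          · have : 0 ≤ max y c := le_trans hy0.le (le_max_left _ _)
            linarith
          · have : max y c ≤ x₀ := max_le hyx hcx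
            linarith
        rw [abs_mul, abs_of_nonneg (by positivity : (0:ℝ) ≤ p * (p - 1) * y ^ (p - 2))]
        have h8 : 0 ≤ p * (p - 1) := by positivity
        exact mul_le_mul (mul_le_mul_of_nonneg_left h5 h8) h7 (abs_nonneg _) (by positivity)
      rw [hsplit, setIntegral_union (Ioc_disjoint_Ioc_of_le le_rfl) measurableSet_Ioc
        (hint 0 c le_rfl hcx) (hint c x₀ hc0 le_rfl)]
      have e1 : ∫ y in Ioc (0:ℝ) c, p * (p - 1) * y ^ (p - 2) * (max y c - x₀)
          = (p * (p - 1) * (c - x₀)) * (c ^ (p - 1) / (p - 1)) := by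
        have hcongr : ∀ y ∈ Ioc (0:ℝ) c,
            p * (p - 1) * y ^ (p - 2) * (max y c - x₀)
              = (p * (p - 1) * (c - x₀)) * y ^ (p - 2) := by
          intro y hy
          rw [max_eq_right hy.2]
          ring
        rw [setIntegral_congr_fun measurableSet_Ioc hcongr, integral_const_mul,
          hIocInt 0 c le_rfl hc0 (p - 2) (by linarith),
          show p - 2 + 1 = p - 1 by ring, Real.zero_rpow (by linarith : p - 1 ≠ 0), sub_zero]
      have e2 : ∫ y in Ioc c x₀, p * (p - 1) * y ^ (p - 2) * (max y c - x₀)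
          = p * (p - 1) * ((x₀ ^ p - c ^ p) / p) - p * (p - 1) * x₀ * ((x₀ ^ (p - 1) - c ^ (p - 1)) / (p - 1)) := by
        have hcongr : ∀ y ∈ Ioc c x₀,
            p * (p - 1) * y ^ (p - 2) * (max y c - x₀)
              = p * (p - 1) * y ^ (p - 1) - (p * (p - 1) * x₀) * y ^ (p - 2) := by
          intro y hy
          have hy0 : 0 < y := lt_of_le_of_lt hc0 hy.1
          rw [max_eq_left hy.1.le]
          have : y ^ (p - 1) = y ^ (p - 2) * y := by
            rw [show p - 1 = p - 2 + 1 by ring, Real.rpow_add_one hy0.ne']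
          rw [this]
          ring
        have i1 : IntegrableOn (fun y : ℝ => p * (p - 1) * y ^ (p - 1)) (Ioc c x₀) volume := by
          rw [← intervalIntegrable_iff_integrableOn_Ioc_of_le hcx]
          exact (intervalIntegral.intervalIntegrable_rpow' (by linarith)).const_mul _
        have i2 : IntegrableOn (fun y : ℝ => (p * (p - 1) * x₀) * y ^ (p - 2)) (Ioc c x₀)
            volume := by
          rw [← intervalIntegrable_iff_integrableOn_Ioc_of_le hcx]
          exact (intervalIntegral.intervalIntegrable_rpow' (by linarith)).const_mul _
        rw [setIntegral_congr_fun measurableSet_Ioc hcongr, integral_sub i1 i2,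
          integral_const_mul, integral_const_mul,
          hIocInt c x₀ hc0 hcx (p - 1) (by linarith),
          hIocInt c x₀ hc0 hcx (p - 2) (by linarith),
          show p - 1 + 1 = p by ring, show p - 2 + 1 = p - 1 by ring]
      rw [e1, e2]
      have hrq : ∀ x : ℝ, 0 ≤ x → x ^ p = x ^ (p - 1) * x := by
        intro x hx
        rcases hx.eq_or_lt with h | h
        · rw [← h, Real.zero_rpow (by linarith : p ≠ 0),
            Real.zero_rpow (by linarith : p - 1 ≠ 0), mul_zero]
        · have h9 := Real.rpow_add_one h.ne' (p - 1)
          rw [show p - 1 + 1 = p by ring] at h9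
          exact h9
      rw [hrq c hc0, hrq x₀ hx₀]
      field_simp
      ring
    rw [step1, step2, step3, step4]
  -- basic facts for u
  have h1βnn : (0:ℝ) ≤ 1 + β := by linarith
  have huae : ∀ᵐ t ∂μ, 0 ≤ u t ∧ u t ≤ Cu := haemem.mono fun t ht => ⟨hu0 t ht, hub t ht⟩
  set Bf : ℝ → ℝ := fun t => ∫ s in Ioc t T, u s ^ (1 + β) ∂μ with hBfdef
  set Af : ℝ → ℝ := fun t => ∫ s in t..T, φ s with hAfdef
  have hu13m : Measurable (fun s => u s ^ (1 + β)) := (hrpm _ h1βnn).comp hum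
  have hu13i : Integrable (fun s => u s ^ (1 + β)) μ := by
    refine aux_bdd_integrable hu13m.aestronglyMeasurable (C := Cu ^ (1 + β)) ?_
    filter_upwards [huae] with t ht
    rw [abs_of_nonneg (Real.rpow_nonneg ht.1 _)]
    exact Real.rpow_le_rpow ht.1 ht.2 h1βnn
  have hu13nn : ∀ᵐ s ∂μ, 0 ≤ u s ^ (1 + β) := huae.mono fun s hs => Real.rpow_nonneg hs.1 _
  have hBanti : Antitone Bf := by
    intro a b hab
    exact setIntegral_mono_set hu13i.integrableOn (ae_restrict_of_ae hu13nn)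
      ((Ioc_subset_Ioc_left hab).eventuallyLE)
  have hBm : Measurable Bf := hBanti.measurable
  have hBbd : ∀ t, |Bf t| ≤ Cu ^ (1 + β) * (μ univ).toReal := by
    intro t
    have h1 : 0 ≤ Bf t := integral_nonneg_of_ae (ae_restrict_of_ae hu13nn)
    have h2 : Bf t ≤ ∫ _ in Ioc t T, Cu ^ (1 + β) ∂μ := by
      refine integral_mono_ae hu13i.integrableOn (integrable_const _) ?_
      filter_upwards [ae_restrict_of_ae huae] with s hs
      exact Real.rpow_le_rpow hs.1 hs.2 h1βnn
    rw [abs_of_nonneg h1]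
    calc Bf t ≤ ∫ _ in Ioc t T, Cu ^ (1 + β) ∂μ := h2
      _ = (μ (Ioc t T)).toReal * Cu ^ (1 + β) := by rw [setIntegral_const]; rfl
      _ ≤ (μ univ).toReal * Cu ^ (1 + β) := by
          have h3 : (μ (Ioc t T)).toReal ≤ (μ univ).toReal :=
            ENNReal.toReal_mono (measure_ne_top μ _) (measure_mono (subset_univ _))
          have h4 : (0:ℝ) ≤ Cu ^ (1 + β) := Real.rpow_nonneg hCu0 _
          exact mul_le_mul_of_nonneg_right h3 h4
      _ = Cu ^ (1 + β) * (μ univ).toReal := mul_comm _ _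
  have hgBi : Integrable (fun t => g t * Bf t) μ := by
    refine (hgi.abs.mul_const (Cu ^ (1 + β) * (μ univ).toReal)).mono'
      ((hgm.mul hBm).aestronglyMeasurable) (Filter.Eventually.of_forall fun t => ?_)
    rw [Real.norm_eq_abs, abs_mul]
    exact mul_le_mul_of_nonneg_left (hBbd t) (abs_nonneg _)
  have hgui : Integrable (fun t => g t * u t) μ := by
    refine (hgi.abs.mul_const Cu).mono' ((hgm.mul hum).aestronglyMeasurable) ?_
    filter_upwards [huae] with t ht
    rw [Real.norm_eq_abs, abs_mul]
    exact mul_le_mul_of_nonneg_left (by rw [abs_of_nonneg ht.1]; exact ht.2) (abs_nonneg _)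
  have huAf : ∀ t ∈ Icc (0:ℝ) T, Af t = u t - ρ + (p - 1) * Bf t := by
    intro t ht
    have h5 := hu t ht
    rw [h1β] at h5
    have hb : Bf t = ∫ s in Ioc t T, u s ^ (1 + β) ∂μ := rfl
    have ha : Af t = ∫ s in t..T, φ s := rfl
    rw [hb, ha]
    linarith
  have hgAi : Integrable (fun t => g t * Af t) μ := by
    have hcong : (fun t => g t * u t - ρ * g t + (p - 1) * (g t * Bf t)) =ᵐ[μ]
        fun t => g t * Af t := by
      filter_upwards [haemem] with t ht
      rw [huAf t ht]
      ring
    exact ((hgui.sub (hgi.const_mul ρ)).add (hgBi.const_mul (p - 1))).congr hcong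
  have hXpu : Integrable (fun t => X t ^ p * u t ^ (1 + β)) μ := by
    refine aux_bdd_integrable (((hrpm p hp0.le).comp hXm).mul hu13m).aestronglyMeasurable
      (C := x₀ ^ p * Cu ^ (1 + β)) ?_
    filter_upwards [haemem] with t ht
    have h1 : 0 ≤ X t := hXpos t ht
    rw [abs_mul, abs_of_nonneg (Real.rpow_nonneg h1 _),
      abs_of_nonneg (Real.rpow_nonneg (hu0 t ht) _)]
    exact mul_le_mul (Real.rpow_le_rpow h1 (hXle t) hp0.le)
      (Real.rpow_le_rpow (hu0 t ht) (hub t ht) h1βnn)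
      (Real.rpow_nonneg (hu0 t ht) _) (Real.rpow_nonneg hx₀ _)
  -- indicator set lemmas
  set S1 : Set (ℝ × ℝ) := {z | z.1 < z.2} with hS1def
  have hS1m : MeasurableSet S1 := measurableSet_lt measurable_fst measurable_snd
  have hIoiInterIcc : ∀ t ∈ Icc (0:ℝ) T, Ioi t ∩ Icc 0 T = Ioc t T := by
    intro t ht; ext s
    constructor
    · rintro ⟨h1, _, h3⟩; exact ⟨h1, h3⟩
    · rintro ⟨h1, h2⟩; exact ⟨h1, le_trans ht.1 h1.le, h2⟩
  have hIoiInterIoc : ∀ t ∈ Icc (0:ℝ) T, Ioi t ∩ Ioc 0 T = Ioc t T := by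
    intro t ht; ext s
    constructor
    · rintro ⟨h1, _, h3⟩; exact ⟨h1, h3⟩
    · rintro ⟨h1, h2⟩; exact ⟨h1, lt_of_le_of_lt ht.1 h1, h2⟩
  have hIioInter : ∀ s ∈ Icc (0:ℝ) T, {t | t < s} ∩ Icc 0 T = Ico 0 s := by
    intro s hs; ext t
    constructor
    · rintro ⟨h1, h2, _⟩; exact ⟨h2, h1⟩
    · rintro ⟨h1, h2⟩; exact ⟨h2, h1, le_trans h2.le hs.2⟩
  have hsetm' : ∀ s : ℝ, MeasurableSet {t : ℝ | t < s} := fun s => measurableSet_Iio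
  -- E_B : the μ-Fubini term
  have E_B : ∫ t in Icc (0:ℝ) T, g t * Bf t ∂μ
      = (∫ t in Icc (0:ℝ) T, X t ^ p * u t ^ (1 + β) ∂μ)
        - x₀ ^ p * ∫ t in Icc (0:ℝ) T, u t ^ (1 + β) ∂μ := by
    have hb1 : ∫ t in Icc (0:ℝ) T, g t * Bf t ∂μ
        = ∫ t, ∫ s, (if (t, s) ∈ S1 then g t * u s ^ (1 + β) else 0) ∂(μ.restrict (Icc 0 T))
            ∂(μ.restrict (Icc (0:ℝ) T)) := by
      refine integral_congr_ae ?_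
      filter_upwards [ae_restrict_mem measurableSet_Icc] with t ht
      have h4 : (fun s => if (t, s) ∈ S1 then g t * u s ^ (1 + β) else 0)
          = fun s => g t * Set.indicator (Ioi t) (fun s => u s ^ (1 + β)) s := by
        funext s
        rw [Set.indicator_apply]
        by_cases h : t < s
        · have h' : (t, s) ∈ S1 := h
          have h'' : s ∈ Ioi t := h
          rw [if_pos h', if_pos h'']
        · have h' : (t, s) ∉ S1 := h
          have h'' : s ∉ Ioi t := h
          rw [if_neg h', if_neg h'', mul_zero]
      rw [h4, integral_const_mul, integral_indicator measurableSet_Ioi,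
        Measure.restrict_restrict measurableSet_Ioi, hIoiInterIcc t ht]
    have hbb : ∀ᵐ s ∂(μ.restrict (Icc (0:ℝ) T)), |u s ^ (1 + β)| ≤ Cu ^ (1 + β) := by
      filter_upwards [ae_restrict_mem measurableSet_Icc] with s hs
      rw [abs_of_nonneg (Real.rpow_nonneg (hu0 s hs) _)]
      exact Real.rpow_le_rpow (hu0 s hs) (hub s hs) h1βnn
    have hb2 := aux_swap (m₁ := μ.restrict (Icc (0:ℝ) T)) (m₂ := μ.restrict (Icc (0:ℝ) T))
      hgm hu13m (hgi.restrict) hbb hS1m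
    have hb3 : ∫ s, ∫ t, (if (t, s) ∈ S1 then g t * u s ^ (1 + β) else 0)
          ∂(μ.restrict (Icc (0:ℝ) T)) ∂(μ.restrict (Icc (0:ℝ) T))
        = ∫ s in Icc (0:ℝ) T,
            (X s ^ p * u s ^ (1 + β) - x₀ ^ p * u s ^ (1 + β)) ∂μ := by
      refine integral_congr_ae ?_
      filter_upwards [ae_restrict_mem measurableSet_Icc] with s hs
      have h4 : (fun t => if (t, s) ∈ S1 then g t * u s ^ (1 + β) else 0)
          = fun t => u s ^ (1 + β) * Set.indicator {t | t < s} g t := by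
        funext t
        rw [Set.indicator_apply]
        by_cases h : t < s
        · have h' : (t, s) ∈ S1 := h
          have h'' : t ∈ {t | t < s} := h
          rw [if_pos h', if_pos h'']
          ring
        · have h' : (t, s) ∉ S1 := h
          have h'' : t ∉ {t | t < s} := h
          rw [if_neg h', if_neg h'', mul_zero]
      rw [h4, integral_const_mul, integral_indicator (hsetm' s),
        Measure.restrict_restrict (hsetm' s), hIioInter s hs,
        show ∫ t in Ico 0 s, g t ∂μ = ∫ t in Icc 0 s, g t ∂μ from
          (integral_Icc_eq_integral_Ico).symm, hCR s hs]
      ring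
    rw [hb1, hb2, hb3, integral_sub hXpu.restrict ((hu13i.const_mul (x₀ ^ p)).restrict),
      integral_const_mul]
  -- E_A : the Lebesgue-Fubini term
  haveI hfinφ : IsFiniteMeasure (volume.restrict (Ioc (0:ℝ) T)) := by
    constructor
    rw [Measure.restrict_apply_univ, Real.volume_Ioc]
    exact ENNReal.ofReal_lt_top
  have E_A : ∫ t in Icc (0:ℝ) T, g t * Af t ∂μ
      = (∫ t in (0:ℝ)..T, φ t * X t ^ p) - x₀ ^ p * ∫ t in (0:ℝ)..T, φ t := by
    have ha1 : ∫ t in Icc (0:ℝ) T, g t * Af t ∂μ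
        = ∫ t, ∫ s, (if (t, s) ∈ S1 then g t * φ s else 0) ∂(volume.restrict (Ioc 0 T))
            ∂(μ.restrict (Icc (0:ℝ) T)) := by
      refine integral_congr_ae ?_
      filter_upwards [ae_restrict_mem measurableSet_Icc] with t ht
      have h4 : (fun s => if (t, s) ∈ S1 then g t * φ s else 0)
          = fun s => g t * Set.indicator (Ioi t) φ s := by
        funext s
        rw [Set.indicator_apply]
        by_cases h : t < s
        · have h' : (t, s) ∈ S1 := h
          have h'' : s ∈ Ioi t := h
          rw [if_pos h', if_pos h'']
        · have h' : (t, s) ∉ S1 := h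
          have h'' : s ∉ Ioi t := h
          rw [if_neg h', if_neg h'', mul_zero]
      have ha : Af t = ∫ s in Ioc t T, φ s := intervalIntegral.integral_of_le ht.2
      rw [h4, integral_const_mul, integral_indicator measurableSet_Ioi,
        Measure.restrict_restrict measurableSet_Ioi, hIoiInterIoc t ht, ha]
    have hbb : ∀ᵐ s ∂(volume.restrict (Ioc (0:ℝ) T)), |φ s| ≤ Cφ := by
      filter_upwards [ae_restrict_mem measurableSet_Ioc] with s hs
      have hs' : s ∈ Icc (0:ℝ) T := ⟨hs.1.le, hs.2⟩
      rw [abs_of_nonneg (hφ0 s hs')]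
      exact hφb s hs'
    have ha2 := aux_swap (m₁ := μ.restrict (Icc (0:ℝ) T))
      (m₂ := volume.restrict (Ioc (0:ℝ) T)) hgm hφm (hgi.restrict) hbb hS1m
    have ha3 : ∫ s, ∫ t, (if (t, s) ∈ S1 then g t * φ s else 0)
          ∂(μ.restrict (Icc (0:ℝ) T)) ∂(volume.restrict (Ioc (0:ℝ) T))
        = ∫ s in Ioc (0:ℝ) T, (φ s * X s ^ p - x₀ ^ p * φ s) := by
      refine integral_congr_ae ?_
      filter_upwards [ae_restrict_mem measurableSet_Ioc] with s hs
      have hs' : s ∈ Icc (0:ℝ) T := ⟨hs.1.le, hs.2⟩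
      have h4 : (fun t => if (t, s) ∈ S1 then g t * φ s else 0)
          = fun t => φ s * Set.indicator {t | t < s} g t := by
        funext t
        rw [Set.indicator_apply]
        by_cases h : t < s
        · have h' : (t, s) ∈ S1 := h
          have h'' : t ∈ {t | t < s} := h
          rw [if_pos h', if_pos h'']
          ring
        · have h' : (t, s) ∉ S1 := h
          have h'' : t ∉ {t | t < s} := h
          rw [if_neg h', if_neg h'', mul_zero]
      rw [h4, integral_const_mul, integral_indicator (hsetm' s),
        Measure.restrict_restrict (hsetm' s), hIioInter s hs',
        show ∫ t in Ico 0 s, g t ∂μ = ∫ t in Icc 0 s, g t ∂μ from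
          (integral_Icc_eq_integral_Ico).symm, hCR s hs']
      ring
    have iφX : IntegrableOn (fun s => φ s * X s ^ p) (Ioc (0:ℝ) T) volume := by
      refine aux_bdd_integrable (hφm.mul ((hrpm p hp0.le).comp hXm)).aestronglyMeasurable
        (C := Cφ * x₀ ^ p) ?_
      filter_upwards [ae_restrict_mem measurableSet_Ioc] with s hs
      have hs' : s ∈ Icc (0:ℝ) T := ⟨hs.1.le, hs.2⟩
      have h1 : 0 ≤ X s := hXpos s hs'
      rw [abs_mul, abs_of_nonneg (hφ0 s hs'), abs_of_nonneg (Real.rpow_nonneg h1 _)]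
      exact mul_le_mul (hφb s hs') (Real.rpow_le_rpow h1 (hXle s) hp0.le)
        (Real.rpow_nonneg h1 _) hCφ0
    have iφ : IntegrableOn (fun s => x₀ ^ p * φ s) (Ioc (0:ℝ) T) volume := by
      refine aux_bdd_integrable (hφm.const_mul _).aestronglyMeasurable
        (C := x₀ ^ p * Cφ) ?_
      filter_upwards [ae_restrict_mem measurableSet_Ioc] with s hs
      have hs' : s ∈ Icc (0:ℝ) T := ⟨hs.1.le, hs.2⟩
      rw [abs_mul, abs_of_nonneg (Real.rpow_nonneg hx₀ _), abs_of_nonneg (hφ0 s hs')]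
      exact mul_le_mul_of_nonneg_left (hφb s hs') (Real.rpow_nonneg hx₀ _)
    rw [ha1, ha2, ha3, integral_sub iφX iφ, integral_const_mul,
      intervalIntegral.integral_of_le hT.le, intervalIntegral.integral_of_le hT.le]
  -- E_gu
  have E_gu : ∫ t in Icc (0:ℝ) T, g t * u t ∂μ
      = ρ * (X T ^ p - x₀ ^ p) + (∫ t in Icc (0:ℝ) T, g t * Af t ∂μ)
        - (p - 1) * ∫ t in Icc (0:ℝ) T, g t * Bf t ∂μ := by
    have hcong : ∀ᵐ t ∂(μ.restrict (Icc (0:ℝ) T)),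
        g t * u t = ρ * g t + g t * Af t - (p - 1) * (g t * Bf t) := by
      filter_upwards [ae_restrict_mem measurableSet_Icc] with t ht
      rw [huAf t ht]
      ring
    have iA : Integrable (fun a => ρ * g a + g a * Af a) (μ.restrict (Icc (0:ℝ) T)) :=
      ((hgi.const_mul ρ).restrict (s := Icc (0:ℝ) T)).add hgAi.restrict
    have iB : Integrable (fun a => (p - 1) * (g a * Bf a)) (μ.restrict (Icc (0:ℝ) T)) :=
      (hgBi.const_mul (p - 1)).restrict
    rw [integral_congr_ae hcong, integral_sub iA iB,
      integral_add ((hgi.const_mul ρ).restrict (s := Icc (0:ℝ) T)) hgAi.restrict,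
      integral_const_mul, integral_const_mul, hCR T hTT]
  -- exponent identities
  have hβp1 : β * (p - 1) = 1 := by
    rw [hβ]; field_simp
  have hβp : β * p = 1 + β := by
    rw [hβ]; field_simp; ring
  -- E_split
  have E_split : (∫ t in Icc (0:ℝ) T,
        (|ξ t| ^ p - p * (X t * u t ^ β) ^ (p - 1) * |ξ t|
          + (p - 1) * (X t * u t ^ β) ^ p) ∂μ)
      = (∫ t in Icc (0:ℝ) T, |ξ t| ^ p ∂μ) + (∫ t in Icc (0:ℝ) T, g t * u t ∂μ)
        + (p - 1) * ∫ t in Icc (0:ℝ) T, X t ^ p * u t ^ (1 + β) ∂μ := by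
    have hcong : ∀ᵐ t ∂(μ.restrict (Icc (0:ℝ) T)),
        |ξ t| ^ p - p * (X t * u t ^ β) ^ (p - 1) * |ξ t| + (p - 1) * (X t * u t ^ β) ^ p
          = |ξ t| ^ p + g t * u t + (p - 1) * (X t ^ p * u t ^ (1 + β)) := by
      filter_upwards [ae_restrict_mem measurableSet_Icc] with t ht
      have hXt : 0 ≤ X t := hXpos t ht
      have hut : 0 ≤ u t := hu0 t ht
      have hub' : 0 ≤ u t ^ β := Real.rpow_nonneg hut _
      have e1 : (X t * u t ^ β) ^ (p - 1) = X t ^ (p - 1) * u t := by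
        rw [Real.mul_rpow hXt hub', ← Real.rpow_mul hut, hβp1, Real.rpow_one]
      have e2 : (X t * u t ^ β) ^ p = X t ^ p * u t ^ (1 + β) := by
        rw [Real.mul_rpow hXt hub', ← Real.rpow_mul hut, hβp]
      have e3 : |ξ t| = -ξ t := abs_of_nonpos (hξ0 t ht)
      rw [e1, e2, e3]
      show _ = _ + p * X t ^ (p - 1) * ξ t * u t + _
      ring
    have iA : Integrable (fun t => |ξ t| ^ p + g t * u t) (μ.restrict (Icc (0:ℝ) T)) :=
      hξint.add (hgui.restrict (s := Icc (0:ℝ) T))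
    have iB : Integrable (fun t => (p - 1) * (X t ^ p * u t ^ (1 + β)))
        (μ.restrict (Icc (0:ℝ) T)) := (hXpu.restrict).const_mul (p - 1)
    rw [integral_congr_ae hcong, integral_add iA iB,
      integral_add hξint (hgui.restrict (s := Icc (0:ℝ) T)), integral_const_mul]
  -- E_u0
  have E_u0 : u 0 = ρ + (∫ t in (0:ℝ)..T, φ t)
      - (p - 1) * ∫ t in Icc (0:ℝ) T, u t ^ (1 + β) ∂μ := by
    have h5 := hu 0 hT0
    rw [h1β] at h5
    rw [h5, integral_Icc_eq_integral_Ioc]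
  rw [E_split, E_gu, E_A, E_B, E_u0]
  ring
end

section
/- Uniqueness for the linear measure ODE: Let T > 0, let μ be a finite Borel measure on [0,T] with no atoms, let a : [0,T] → [0,∞) be bounded measurable, and let x₀ ∈ ℝ. If X, Y : [0,T] → ℝ are bounded, measurable, and both satisfy Z_t = x₀ − ∫_{[0,t]} Z_s·a(s) μ(ds) for all t ∈ [0,T], then X_t = Y_t for all t ∈ [0,T]. -/
open MeasureTheory Set Filter Topology ENNReal

/-- Uniqueness for the linear measure ODE `Z_t = x₀ − ∫_{[0,t]} Z_s·a(s) μ(ds)` driven by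
a finite atomless measure `μ` with bounded coefficient `a ≥ 0`. -/
theorem linear_measure_ODE_unique (T : ℝ) (hT : 0 < T)
    (μ : Measure ℝ) [IsFiniteMeasure μ] [NullSingletonClass μ] (hμsupp : μ (Icc (0:ℝ) T)ᶜ = 0)
    (a : ℝ → ℝ) (ham : Measurable a) (ha0 : ∀ t ∈ Icc (0:ℝ) T, 0 ≤ a t)
    (Ca : ℝ) (hab : ∀ t ∈ Icc (0:ℝ) T, a t ≤ Ca)
    (x₀ : ℝ) (X Y : ℝ → ℝ) (hXm : Measurable X) (hYm : Measurable Y)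
    (CX : ℝ) (hXb : ∀ t ∈ Icc (0:ℝ) T, |X t| ≤ CX)
    (CY : ℝ) (hYb : ∀ t ∈ Icc (0:ℝ) T, |Y t| ≤ CY)
    (hX : ∀ t ∈ Icc (0:ℝ) T, X t = x₀ - ∫ s in Icc (0:ℝ) t, X s * a s ∂μ)
    (hY : ∀ t ∈ Icc (0:ℝ) T, Y t = x₀ - ∫ s in Icc (0:ℝ) t, Y s * a s ∂μ) :
    ∀ t ∈ Icc (0:ℝ) T, X t = Y t := by
  have hae : ∀ᵐ x ∂μ, x ∈ Icc (0:ℝ) T := by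
    rw [ae_iff]
    exact hμsupp
  have hCa0 : 0 ≤ Ca := le_trans (ha0 0 ⟨le_refl 0, hT.le⟩) (hab 0 ⟨le_refl 0, hT.le⟩)
  -- integrability of `Z * a` for measurable, bounded `Z`
  have hint : ∀ (Z : ℝ → ℝ), Measurable Z → ∀ (CZ : ℝ), (∀ t ∈ Icc (0:ℝ) T, |Z t| ≤ CZ) →
      Integrable (fun s => Z s * a s) μ := by
    intro Z hZm CZ hZb
    refine Integrable.mono' (integrable_const (CZ * Ca)) ((hZm.mul ham).aestronglyMeasurable) ?_
    filter_upwards [hae] with x hx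
    have h1 := hZb x hx
    have h2 := hab x hx
    have h3 := ha0 x hx
    have hb : |Z x * a x| ≤ CZ * Ca := by
      rw [abs_mul, abs_of_nonneg h3]
      exact mul_le_mul h1 h2 h3 ((abs_nonneg _).trans h1)
    show ‖Z x * a x‖ ≤ CZ * Ca
    rw [Real.norm_eq_abs]
    exact hb
  have hXint := hint X hXm CX hXb
  have hYint := hint Y hYm CY hYb
  set D : ℝ → ℝ := fun t => X t - Y t with hDdef
  -- the difference satisfies the homogeneous equation
  have hDeq : ∀ t ∈ Icc (0:ℝ) T, D t = - ∫ s in Icc (0:ℝ) t, D s * a s ∂μ := by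
    intro t ht
    have hx := hX t ht
    have hy := hY t ht
    have h1 : D t = (∫ s in Icc (0:ℝ) t, Y s * a s ∂μ) - ∫ s in Icc (0:ℝ) t, X s * a s ∂μ := by
      simp only [hDdef, hx, hy]
      ring
    rw [h1, ← integral_sub hYint.integrableOn hXint.integrableOn, ← integral_neg]
    congr 1
    funext s
    simp only [hDdef]
    ring
  -- the set of times up to which the solutions agree
  set A : Set ℝ := {t | t ∈ Icc (0:ℝ) T ∧ ∀ u ∈ Icc (0:ℝ) t, X u = Y u} with hAdef
  have h0A : (0:ℝ) ∈ A := by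
    constructor
    · exact ⟨le_refl 0, hT.le⟩
    · intro u hu
      have hu0 : u = 0 := le_antisymm hu.2 hu.1
      subst hu0
      have h1 := hX 0 ⟨le_refl 0, hT.le⟩
      have h2 := hY 0 ⟨le_refl 0, hT.le⟩
      have hz : ∀ (f : ℝ → ℝ), ∫ s in Icc (0:ℝ) 0, f s ∂μ = 0 := by
        intro f
        rw [Icc_self, Measure.restrict_zero_set (measure_singleton 0), integral_zero_measure]
      rw [h1, h2, hz, hz]
  have hAbdd : BddAbove A := ⟨T, fun t ht => ht.1.2⟩
  have hAne : A.Nonempty := ⟨0, h0A⟩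
  set m := sSup A with hmdef
  have hm0 : 0 ≤ m := le_csSup hAbdd h0A
  have hmT : m ≤ T := csSup_le hAne (fun t ht => ht.1.2)
  have hmIcc : m ∈ Icc (0:ℝ) T := ⟨hm0, hmT⟩
  -- solutions agree strictly before `m`
  have hDlt : ∀ u, 0 ≤ u → u < m → X u = Y u := by
    intro u hu0 hum
    obtain ⟨t, htA, hut⟩ := exists_lt_of_lt_csSup hAne hum
    exact htA.2 u ⟨hu0, hut.le⟩
  -- solutions agree at `m`
  have hDm : X m = Y m := by
    have heq := hDeq m hmIcc
    have hne : ∀ᵐ x ∂μ, x ≠ m := by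
      rw [ae_iff]
      simpa using measure_singleton (μ := μ) m
    have hz : ∫ s in Icc (0:ℝ) m, D s * a s ∂μ = 0 := by
      have hcong : ∀ᵐ x ∂μ, x ∈ Icc (0:ℝ) m → D x * a x = 0 := by
        filter_upwards [hne] with x hx hxm
        have hXY : X x = Y x := hDlt x hxm.1 (lt_of_le_of_ne hxm.2 hx)
        simp [hDdef, hXY]
      rw [setIntegral_congr_ae measurableSet_Icc hcong]
      simp
    have : D m = 0 := by rw [heq, hz, neg_zero]
    have := this
    simp only [hDdef] at this
    linarith
  have hmA : m ∈ A := by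
    refine ⟨hmIcc, fun u hu => ?_⟩
    rcases lt_or_eq_of_le hu.2 with h | h
    · exact hDlt u hu.1 h
    · rw [h]; exact hDm
  -- main claim : m = T
  have hmeqT : m = T := by
    by_contra hne
    have hmlt : m < T := lt_of_le_of_ne hmT hne
    -- choose a small interval beyond m with small measure
    have hIempty : ⋂ n : ℕ, Ioc m (m + 1/(n+1)) = ∅ := by
      ext x
      simp only [mem_iInter, mem_Ioc, mem_empty_iff_false, iff_false, not_forall]
      by_contra hcon
      push_neg at hcon
      have hxm : m < x := (hcon 0).1
      obtain ⟨n, hn⟩ := exists_nat_one_div_lt (sub_pos.mpr hxm)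
      have := (hcon n).2
      have : x - m ≤ 1/(n+1) := by linarith
      linarith
    have hanti : Antitone (fun n : ℕ => Ioc m (m + 1/(n+1) : ℝ)) := by
      intro n k hnk
      apply Ioc_subset_Ioc_right
      have h1 : (1:ℝ)/(k+1) ≤ 1/(n+1) := by
        apply one_div_le_one_div_of_le
        · positivity
        · exact_mod_cast Nat.succ_le_succ hnk
      linarith
    have htend : Tendsto (fun n : ℕ => μ (Ioc m (m + 1/(n+1)))) atTop (𝓝 0) := by
      have h := tendsto_measure_iInter_atTop (μ := μ)
        (fun n : ℕ => measurableSet_Ioc.nullMeasurableSet) hanti ⟨0, measure_ne_top μ _⟩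
      rw [hIempty] at h
      simpa [Function.comp_def] using h
    have hεpos : (0:ℝ≥0∞) < ENNReal.ofReal (1/(2*(Ca+1))) := by
      apply ENNReal.ofReal_pos.mpr
      positivity
    obtain ⟨n, hn⟩ := (htend.eventually_lt_const hεpos).exists
    set δ : ℝ := min (1/(n+1)) (T - m) with hδdef
    have hδpos : 0 < δ := by
      apply lt_min
      · positivity
      · linarith
    set t1 : ℝ := m + δ with ht1def
    have ht1T : t1 ≤ T := by
      have : δ ≤ T - m := min_le_right _ _
      simp only [ht1def]; linarith
    have hmt1 : m < t1 := by simp only [ht1def]; linarith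
    have hsub : Ioc m t1 ⊆ Ioc m (m + 1/(n+1)) := by
      apply Ioc_subset_Ioc_right
      have : δ ≤ 1/(n+1) := min_le_left _ _
      simp only [ht1def]; linarith
    have hμsmall : Ca * (μ (Ioc m t1)).toReal ≤ 1/2 := by
      have h1 : μ (Ioc m t1) < ENNReal.ofReal (1/(2*(Ca+1))) :=
        lt_of_le_of_lt (measure_mono hsub) hn
      have h2 : (μ (Ioc m t1)).toReal < 1/(2*(Ca+1)) := by
        rw [← ENNReal.ofReal_toReal (measure_ne_top μ _)] at h1
        have := (ENNReal.ofReal_lt_ofReal_iff (by positivity)).mp h1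
        exact this
      have h3 : (0:ℝ) ≤ (μ (Ioc m t1)).toReal := ENNReal.toReal_nonneg
      have h4 : Ca * (μ (Ioc m t1)).toReal ≤ (Ca+1) * (1/(2*(Ca+1))) := by
        apply mul_le_mul (by linarith) h2.le h3 (by linarith)
      have h5 : (Ca+1) * (1/(2*(Ca+1))) = 1/2 := by
        field_simp
      linarith [h4, h5.le]
    -- sup of |D| on [m, t1]
    set S : Set ℝ := (fun u => |D u|) '' Icc m t1 with hSdef
    have hSne : S.Nonempty := ⟨|D m|, m, ⟨le_refl m, hmt1.le⟩, rfl⟩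
    have hSbdd : BddAbove S := by
      refine ⟨CX + CY, ?_⟩
      rintro r ⟨u, hu, rfl⟩
      have huT : u ∈ Icc (0:ℝ) T := ⟨hm0.trans hu.1, hu.2.trans ht1T⟩
      have := abs_sub (X u) (Y u)
      simp only [hDdef]
      calc |X u - Y u| ≤ |X u| + |Y u| := abs_sub _ _
        _ ≤ CX + CY := add_le_add (hXb u huT) (hYb u huT)
    set M : ℝ := sSup S with hMdef
    have hMb : ∀ u ∈ Icc m t1, |D u| ≤ M := fun u hu => le_csSup hSbdd ⟨u, hu, rfl⟩
    have hM0 : 0 ≤ M := le_trans (abs_nonneg _) (hMb m ⟨le_refl m, hmt1.le⟩)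
    -- the key contraction estimate
    have hkey : ∀ t ∈ Icc m t1, |D t| ≤ M/2 := by
      intro t ht
      have htIcc : t ∈ Icc (0:ℝ) T := ⟨hm0.trans ht.1, ht.2.trans ht1T⟩
      have heq := hDeq t htIcc
      have hsplit : Icc (0:ℝ) t = Icc 0 m ∪ Ioc m t := (Icc_union_Ioc_eq_Icc hm0 ht.1).symm
      have hDint : Integrable (fun s => D s * a s) μ := by
        have h : Integrable (fun s => X s * a s - Y s * a s) μ := hXint.sub hYint
        have hfun : (fun s => X s * a s - Y s * a s) = fun s => D s * a s := by
          funext s; simp only [hDdef]; ring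
        rwa [hfun] at h
      have hdisj : Disjoint (Icc (0:ℝ) m) (Ioc m t) := by
        apply Set.disjoint_left.mpr
        rintro x ⟨_, hx2⟩ ⟨hx3, _⟩
        exact absurd hx3 (not_lt.mpr hx2)
      have hsum : ∫ s in Icc (0:ℝ) t, D s * a s ∂μ =
          (∫ s in Icc (0:ℝ) m, D s * a s ∂μ) + ∫ s in Ioc m t, D s * a s ∂μ := by
        rw [hsplit]
        exact setIntegral_union hdisj measurableSet_Ioc hDint.integrableOn hDint.integrableOn
      have hz1 : ∫ s in Icc (0:ℝ) m, D s * a s ∂μ = 0 := by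
        have hcong : EqOn (fun s => D s * a s) (fun _ => (0:ℝ)) (Icc (0:ℝ) m) := by
          intro s hs
          have : X s = Y s := hmA.2 s hs
          simp [hDdef, this]
        rw [setIntegral_congr_fun measurableSet_Icc hcong]
        simp
      have hbd : ‖∫ s in Ioc m t, D s * a s ∂μ‖ ≤ (M * Ca) * (μ (Ioc m t)).toReal := by
        apply norm_setIntegral_le_of_norm_le_const (measure_lt_top μ _)
        intro x hx
        have hx1 : x ∈ Icc m t1 := ⟨hx.1.le, hx.2.trans ht.2⟩
        have hxT : x ∈ Icc (0:ℝ) T := ⟨hm0.trans hx1.1, hx1.2.trans ht1T⟩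
        rw [Real.norm_eq_abs, abs_mul, abs_of_nonneg (ha0 x hxT)]
        exact mul_le_mul (hMb x hx1) (hab x hxT) (ha0 x hxT) hM0
      have hμmono : (μ (Ioc m t)).toReal ≤ (μ (Ioc m t1)).toReal :=
        ENNReal.toReal_mono (measure_ne_top μ _) (measure_mono (Ioc_subset_Ioc_right ht.2))
      have hfinal : |D t| ≤ (M * Ca) * (μ (Ioc m t1)).toReal := by
        rw [heq, hsum, hz1, zero_add, abs_neg]
        calc |∫ s in Ioc m t, D s * a s ∂μ| ≤ (M * Ca) * (μ (Ioc m t)).toReal := hbd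
          _ ≤ (M * Ca) * (μ (Ioc m t1)).toReal := by
              apply mul_le_mul_of_nonneg_left hμmono (by positivity)
      calc |D t| ≤ (M * Ca) * (μ (Ioc m t1)).toReal := hfinal
        _ = M * (Ca * (μ (Ioc m t1)).toReal) := by ring
        _ ≤ M * (1/2) := mul_le_mul_of_nonneg_left hμsmall hM0
        _ = M/2 := by ring
    have hMle : M ≤ M/2 := by
      apply csSup_le hSne
      rintro r ⟨u, hu, rfl⟩
      exact hkey u hu
    have hMzero : M = 0 := by linarith
    have ht1A : t1 ∈ A := by
      refine ⟨⟨hm0.trans hmt1.le, ht1T⟩, fun u hu => ?_⟩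
      rcases le_or_gt u m with h | h
      · exact hmA.2 u ⟨hu.1, h⟩
      · have := hMb u ⟨h.le, hu.2⟩
        rw [hMzero] at this
        have habs : |D u| = 0 := le_antisymm this (abs_nonneg _)
        have := abs_eq_zero.mp habs
        simp only [hDdef] at this
        linarith
    have := le_csSup hAbdd ht1A
    rw [← hmdef] at this
    linarith
  intro t ht
  exact hmA.2 t ⟨ht.1, hmeqT ▸ ht.2⟩
end

section
/- Uniqueness for the nonlinear adjoint equation: Let T > 0, β ∈ (0,1], let μ be a finite Borel measure on [0,T] with no atoms, let φ : [0,T] → [0,∞) be bounded measurable, and ρ ≥ 0. If u, v : [0,T] → [0,∞) are bounded, measurable, and both satisfy w(t) = ρ + ∫_t^T φ(s) ds − (1/β)·∫_{(t,T]} w(s)^{1+β} μ(ds) for all t ∈ [0,T], then u(t) = v(t) for all t ∈ [0,T]. -/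
open MeasureTheory Set

lemma rpow_lip_aux {β C x y : ℝ} (hβ : 0 < β) (hx : x ∈ Icc 0 C) (hy : y ∈ Icc 0 C)
    (hyx : y ≤ x) : |x ^ (1+β) - y ^ (1+β)| ≤ (1+β) * C^β * |x - y| := by
  obtain ⟨hy0, hyC⟩ := hy; obtain ⟨hx0, hxC⟩ := hx
  rcases eq_or_lt_of_le hyx with rfl | hlt
  · simp
  have hp : (1:ℝ) ≤ 1 + β := by linarith
  have hcont : ContinuousOn (fun t : ℝ => t ^ (1+β)) (Icc y x) :=
    (Real.continuous_rpow_const (by linarith)).continuousOn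
  have hderiv : ∀ c ∈ Ioo y x, HasDerivAt (fun t : ℝ => t ^ (1+β)) ((1+β) * c ^ β) c := by
    intro c _
    have := Real.hasDerivAt_rpow_const (x := c) (p := 1+β) (Or.inr hp)
    simpa using this
  obtain ⟨c, hc, hceq⟩ := exists_hasDerivAt_eq_slope _ _ hlt hcont hderiv
  have hc0 : 0 ≤ c := le_trans hy0 hc.1.le
  have hcC : c ≤ C := le_trans hc.2.le hxC
  have hcb : c ^ β ≤ C ^ β := Real.rpow_le_rpow hc0 hcC hβ.le
  have hxy : x ^ (1+β) - y ^ (1+β) = (1+β) * c ^ β * (x - y) := by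
    rw [eq_div_iff (by linarith : x - y ≠ 0)] at hceq
    linarith
  have h1 : y ^ (1+β) ≤ x ^ (1+β) := Real.rpow_le_rpow hy0 hyx (by linarith)
  rw [abs_of_nonneg (by linarith), abs_of_nonneg (by linarith)]
  rw [hxy]
  have hxy0 : (0:ℝ) ≤ x - y := by linarith
  have := mul_le_mul_of_nonneg_right
    (mul_le_mul_of_nonneg_left hcb (by linarith : (0:ℝ) ≤ 1+β)) hxy0
  linarith

lemma rpow_lip {β C x y : ℝ} (hβ : 0 < β) (hx : x ∈ Icc 0 C) (hy : y ∈ Icc 0 C) :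
    |x ^ (1+β) - y ^ (1+β)| ≤ (1+β) * C^β * |x - y| := by
  rcases le_total y x with h | h
  · exact rpow_lip_aux hβ hx hy h
  · rw [abs_sub_comm, abs_sub_comm x y]; exact rpow_lip_aux hβ hy hx h

/-- Uniqueness of bounded nonnegative solutions of the nonlinear adjoint equation
`w(t) = ρ + ∫_t^T φ ds − (1/β)·∫_{(t,T]} w^{1+β} dμ` for a finite atomless measure `μ`. -/
theorem adjoint_equation_unique (T β : ℝ) (hT : 0 < T) (hβ0 : 0 < β) (hβ1 : β ≤ 1)
    (μ : Measure ℝ) [IsFiniteMeasure μ] [NullSingletonClass μ] (hμsupp : μ (Icc (0:ℝ) T)ᶜ = 0)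
    (φ : ℝ → ℝ) (hφm : Measurable φ) (hφ0 : ∀ t ∈ Icc (0:ℝ) T, 0 ≤ φ t)
    (Cφ : ℝ) (hφb : ∀ t ∈ Icc (0:ℝ) T, φ t ≤ Cφ)
    (ρ : ℝ) (hρ : 0 ≤ ρ)
    (u v : ℝ → ℝ) (hum : Measurable u) (hvm : Measurable v)
    (hu0 : ∀ t ∈ Icc (0:ℝ) T, 0 ≤ u t) (hv0 : ∀ t ∈ Icc (0:ℝ) T, 0 ≤ v t)
    (Cu : ℝ) (hub : ∀ t ∈ Icc (0:ℝ) T, u t ≤ Cu)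
    (Cv : ℝ) (hvb : ∀ t ∈ Icc (0:ℝ) T, v t ≤ Cv)
    (hu : ∀ t ∈ Icc (0:ℝ) T,
      u t = ρ + (∫ s in t..T, φ s) - (1 / β) * ∫ s in Ioc t T, u s ^ (1 + β) ∂μ)
    (hv : ∀ t ∈ Icc (0:ℝ) T,
      v t = ρ + (∫ s in t..T, φ s) - (1 / β) * ∫ s in Ioc t T, v s ^ (1 + β) ∂μ) :
    ∀ t ∈ Icc (0:ℝ) T, u t = v t := by
  have hμae : ∀ᵐ s ∂μ, s ∈ Icc (0:ℝ) T := by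
    rw [ae_iff]
    exact hμsupp
  set C : ℝ := max Cu (max Cv 0) with hC
  have hCu : Cu ≤ C := le_max_left _ _
  have hCv : Cv ≤ C := le_trans (le_max_left _ _) (le_max_right _ _)
  have hC0 : 0 ≤ C := le_trans (le_max_right _ _) (le_max_right _ _)
  have huC : ∀ s ∈ Icc (0:ℝ) T, u s ∈ Icc 0 C :=
    fun s hs => ⟨hu0 s hs, le_trans (hub s hs) hCu⟩
  have hvC : ∀ s ∈ Icc (0:ℝ) T, v s ∈ Icc 0 C :=
    fun s hs => ⟨hv0 s hs, le_trans (hvb s hs) hCv⟩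
  set L : ℝ := (1 + β) * C ^ β with hL
  have hL0 : 0 ≤ L := by
    have := Real.rpow_nonneg hC0 β
    positivity
  -- integrability
  have hint : ∀ w : ℝ → ℝ, Measurable w → (∀ s ∈ Icc (0:ℝ) T, w s ∈ Icc 0 C) →
      Integrable (fun r => w r ^ (1 + β)) μ := by
    intro w hwm hwC
    refine Integrable.mono' (integrable_const (C ^ (1 + β))) (((Real.continuous_rpow_const (by linarith)).measurable.comp hwm)).aestronglyMeasurable ?_
    filter_upwards [hμae] with s hs
    rw [Real.norm_eq_abs, abs_of_nonneg (Real.rpow_nonneg (hwC s hs).1 _)]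
    exact Real.rpow_le_rpow (hwC s hs).1 (hwC s hs).2 (by linarith)
  have hintu := hint u hum huC
  have hintv := hint v hvm hvC
  -- difference identity
  have key : ∀ t ∈ Icc (0:ℝ) T,
      u t - v t = (1 / β) * ∫ s in Ioc t T, (v s ^ (1 + β) - u s ^ (1 + β)) ∂μ := by
    intro t ht
    rw [integral_sub hintv.integrableOn hintu.integrableOn]
    rw [hu t ht, hv t ht]
    ring
  -- the set where u = v from t to T
  set S : Set ℝ := {t | t ∈ Icc (0:ℝ) T ∧ ∀ s ∈ Icc t T, u s = v s} with hS
  have hTS : T ∈ S := by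
    constructor
    · exact ⟨hT.le, le_refl T⟩
    · intro s hs
      have hsT : s = T := le_antisymm hs.2 hs.1
      subst hsT
      have h1 := hu s ⟨hT.le, le_refl s⟩
      have h2 := hv s ⟨hT.le, le_refl s⟩
      simp [intervalIntegral.integral_same, Ioc_self] at h1 h2
      rw [h1, h2]
  have hSne : S.Nonempty := ⟨T, hTS⟩
  have hSbd : BddBelow S := ⟨0, fun x hx => hx.1.1⟩
  set τ : ℝ := sInf S with hτ
  have hτ0 : 0 ≤ τ := le_csInf hSne (fun x hx => hx.1.1)
  have hτT : τ ≤ T := csInf_le hSbd hTS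
  -- u = v on (τ, T]
  have hDz : ∀ s ∈ Ioc τ T, u s = v s := by
    intro s hs
    obtain ⟨t, htS, hts⟩ := exists_lt_of_csInf_lt hSne hs.1
    exact htS.2 s ⟨hts.le, hs.2⟩
  -- τ ∈ S
  have hτS : τ ∈ S := by
    refine ⟨⟨hτ0, hτT⟩, ?_⟩
    have huvτ : u τ = v τ := by
      have h := key τ ⟨hτ0, hτT⟩
      have hz : ∫ s in Ioc τ T, (v s ^ (1 + β) - u s ^ (1 + β)) ∂μ = 0 := by
        rw [setIntegral_congr_fun measurableSet_Ioc
          (g := fun _ => (0:ℝ)) (fun s hs => by rw [hDz s hs]; ring)]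
        simp
      rw [hz] at h
      linarith [h]
    intro s hs
    rcases eq_or_lt_of_le hs.1 with rfl | hlt
    · exact huvτ
    · exact hDz s ⟨hlt, hs.2⟩
  -- main estimate for contradiction
  have hτeq : τ = 0 := by
    by_contra hne
    have hτpos : 0 < τ := lt_of_le_of_ne hτ0 (Ne.symm hne)
    set K : ℝ := (1 / β) * L with hK
    have hK0 : 0 ≤ K := by positivity
    -- choose a < τ with small measure
    obtain ⟨a, ha0, haτ, hasmall⟩ :
        ∃ a, 0 ≤ a ∧ a < τ ∧ K * (μ (Ioc a τ)).toReal ≤ 1/2 := by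
      set sn : ℕ → Set ℝ := fun n => Ioc (τ - 1/(n+1)) τ with hsn
      have hanti : Antitone sn := by
        intro n m hnm
        apply Ioc_subset_Ioc_left
        have h1 : (1:ℝ)/(m+1) ≤ 1/(n+1) := by
          apply one_div_le_one_div_of_le (by positivity)
          exact_mod_cast by exact_mod_cast add_le_add_left (Nat.cast_le.mpr hnm) 1
        linarith
      have hiInter : (⋂ n, sn n) = {τ} := by
        ext s
        simp only [mem_iInter, mem_Ioc, mem_singleton_iff, hsn]
        constructor
        · intro h
          have hsτ : s ≤ τ := (h 0).2
          rcases eq_or_lt_of_le hsτ with heq | hlt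
          · exact heq
          · obtain ⟨n, hn⟩ := exists_nat_one_div_lt (show (0:ℝ) < τ - s by linarith)
            exact absurd (h n).1 (by push_cast; linarith)
        · rintro rfl
          intro n
          refine ⟨?_, le_refl τ⟩
          have : (0:ℝ) < 1/(n+1) := by positivity
          linarith
      have htend : Filter.Tendsto (μ ∘ sn) Filter.atTop (nhds (μ (⋂ n, sn n))) :=
        tendsto_measure_iInter_atTop
          (fun n => measurableSet_Ioc.nullMeasurableSet) hanti ⟨0, measure_ne_top μ _⟩
      rw [hiInter, measure_singleton] at htend
      have hεpos : (0:ENNReal) < ENNReal.ofReal (1/(2*(K+1))) :=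
        ENNReal.ofReal_pos.mpr (by positivity)
      obtain ⟨n, hn⟩ := (htend.eventually (gt_mem_nhds hεpos)).exists
      refine ⟨max 0 (τ - 1/(n+1)), le_max_left _ _, ?_, ?_⟩
      · apply max_lt hτpos
        have : (0:ℝ) < 1/(n+1) := by positivity
        linarith
      · have hsub : Ioc (max 0 (τ - 1/(n+1))) τ ⊆ sn n :=
          Ioc_subset_Ioc_left (le_max_right _ _)
        have hμle : μ (Ioc (max 0 (τ - 1/(n+1))) τ) ≤ ENNReal.ofReal (1/(2*(K+1))) :=
          le_of_lt (lt_of_le_of_lt (measure_mono hsub) hn)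
        have htr : (μ (Ioc (max 0 (τ - 1/(n+1))) τ)).toReal ≤ 1/(2*(K+1)) := by
          have := ENNReal.toReal_mono ENNReal.ofReal_ne_top hμle
          rwa [ENNReal.toReal_ofReal (by positivity)] at this
        have hhalf : K * (1/(2*(K+1))) ≤ 1/2 := by
          rw [mul_one_div, div_le_iff₀ (by linarith : (0:ℝ) < 2*(K+1))]
          linarith
        calc K * (μ (Ioc (max 0 (τ - 1/(n+1))) τ)).toReal ≤ K * (1/(2*(K+1))) :=
              mul_le_mul_of_nonneg_left htr hK0
          _ ≤ 1/2 := hhalf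
    -- sup of |u - v| on [a, τ]
    set M : ℝ := sSup ((fun s => |u s - v s|) '' Icc a τ) with hM
    have hbdd : BddAbove ((fun s => |u s - v s|) '' Icc a τ) := by
      refine ⟨C, ?_⟩
      rintro _ ⟨s, hs, rfl⟩
      have hsIcc : s ∈ Icc (0:ℝ) T := ⟨le_trans ha0 hs.1, le_trans hs.2 (le_trans hτT (le_refl T))⟩
      rw [abs_sub_le_iff]
      constructor
      · linarith [(huC s hsIcc).2, (hvC s hsIcc).1]
      · linarith [(hvC s hsIcc).2, (huC s hsIcc).1]
    have hMem : τ ∈ Icc a τ := ⟨haτ.le, le_refl τ⟩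
    have hM0 : 0 ≤ M := le_trans (abs_nonneg _) (le_csSup hbdd ⟨τ, hMem, rfl⟩)
    -- for all t in [a, τ], |u t - v t| ≤ K * μ(Ioc a τ) * M
    have hest : ∀ t ∈ Icc a τ, |u t - v t| ≤ K * (μ (Ioc a τ)).toReal * M := by
      intro t ht
      have htIcc : t ∈ Icc (0:ℝ) T := ⟨le_trans ha0 ht.1, le_trans ht.2 hτT⟩
      have hsplit : Ioc t T = Ioc t τ ∪ Ioc τ T := (Ioc_union_Ioc_eq_Ioc ht.2 hτT).symm
      have hi1 : IntegrableOn (fun s => v s ^ (1 + β) - u s ^ (1 + β)) (Ioc t τ) μ :=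
        (hintv.sub hintu).integrableOn
      have hi2 : IntegrableOn (fun s => v s ^ (1 + β) - u s ^ (1 + β)) (Ioc τ T) μ :=
        (hintv.sub hintu).integrableOn
      have hz : ∫ s in Ioc τ T, (v s ^ (1 + β) - u s ^ (1 + β)) ∂μ = 0 := by
        rw [setIntegral_congr_fun measurableSet_Ioc
          (g := fun _ => (0:ℝ)) (fun s hs => by rw [hDz s hs]; ring)]
        simp
      have hkey := key t htIcc
      rw [hsplit, setIntegral_union (Ioc_disjoint_Ioc_of_le le_rfl) measurableSet_Ioc hi1 hi2, hz,
        add_zero] at hkey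
      have hbound : |∫ s in Ioc t τ, (v s ^ (1 + β) - u s ^ (1 + β)) ∂μ|
          ≤ L * M * (μ (Ioc t τ)).toReal := by
        have := norm_setIntegral_le_of_norm_le_const (μ := μ) (s := Ioc t τ)
          (f := fun s => v s ^ (1 + β) - u s ^ (1 + β)) (C := L * M)
          (measure_lt_top μ _) ?_
        · simpa [Measure.real] using this
        · intro s hs
          have hsIcc : s ∈ Icc (0:ℝ) T := ⟨le_trans htIcc.1 hs.1.le, le_trans hs.2 hτT⟩
          have hsaτ : s ∈ Icc a τ := ⟨le_trans ht.1 hs.1.le, hs.2⟩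
          have hlip := rpow_lip (C := C) hβ0 (hvC s hsIcc) (huC s hsIcc)
          have hMle : |u s - v s| ≤ M := le_csSup hbdd ⟨s, hsaτ, rfl⟩
          rw [Real.norm_eq_abs]
          calc |v s ^ (1 + β) - u s ^ (1 + β)| ≤ L * |v s - u s| := hlip
            _ = L * |u s - v s| := by rw [abs_sub_comm]
            _ ≤ L * M := mul_le_mul_of_nonneg_left hMle hL0
      have hμmono : (μ (Ioc t τ)).toReal ≤ (μ (Ioc a τ)).toReal :=
        ENNReal.toReal_mono (measure_ne_top μ _)
          (measure_mono (Ioc_subset_Ioc_left ht.1))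
      calc |u t - v t| = (1/β) * |∫ s in Ioc t τ, (v s ^ (1 + β) - u s ^ (1 + β)) ∂μ| := by
            rw [hkey, abs_mul, abs_of_nonneg (by positivity : (0:ℝ) ≤ 1/β)]
        _ ≤ (1/β) * (L * M * (μ (Ioc t τ)).toReal) := by
            apply mul_le_mul_of_nonneg_left hbound (by positivity)
        _ ≤ (1/β) * (L * M * (μ (Ioc a τ)).toReal) := by
            apply mul_le_mul_of_nonneg_left
              (mul_le_mul_of_nonneg_left hμmono (by positivity)) (by positivity)
        _ = K * (μ (Ioc a τ)).toReal * M := by ring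
    -- conclude M = 0
    have hMle : M ≤ (1/2) * M := by
      apply Real.sSup_le
      · rintro _ ⟨s, hs, rfl⟩
        calc |u s - v s| ≤ K * (μ (Ioc a τ)).toReal * M := hest s hs
          _ ≤ (1/2) * M := mul_le_mul_of_nonneg_right hasmall hM0
      · positivity
    have hMzero : M = 0 := by linarith
    have haS : a ∈ S := by
      refine ⟨⟨ha0, le_trans haτ.le hτT⟩, ?_⟩
      intro s hs
      rcases le_or_gt s τ with hsτ | hsτ
      · have : |u s - v s| ≤ M := le_csSup hbdd ⟨s, ⟨hs.1, hsτ⟩, rfl⟩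
        rw [hMzero] at this
        have := abs_nonpos_iff.mp this
        linarith [this, abs_nonneg (u s - v s)]
      · exact hDz s ⟨hsτ, hs.2⟩
    have : τ ≤ a := csInf_le hSbd haS
    linarith
  intro t ht
  rw [← hτeq] at ht
  exact hτS.2 t ht
end

section
/- Structure of the improved strategy: Let μ be a Borel measure on [0,∞) with no atoms that is finite on compact sets, let ξ : [0,∞) → ℝ be measurable and μ-integrable on compact sets, and let x₀ > 0. Define X^ξ_t := x₀ + ∫_{[0,t]} ξ dμ, G(t) := ∫_{[0,t]} ξ⁻ dμ (with ξ⁻ the negative part of ξ), and η_t := −ξ⁻_t·1_{\{G(t) ≤ x₀\}}, with X^η_t := x₀ + ∫_{[0,t]} η dμ. Then for all t ≥ 0: (i) X^η_t = max(x₀ − G(t), 0); (ii) X^η is nonincreasing and 0 ≤ X^η_t ≤ x₀; (iii) X^η_t ≤ |X^ξ_t|; (iv) |η_t| ≤ |ξ_t|. -/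
open MeasureTheory Set Filter Topology

/-- Structure of the improved strategy: executing only the selling part `ξ⁻` of `ξ` and
stopping once the cumulative sales `G` reach `x₀` yields the inventory
`X^η_t = max(x₀ − G(t), 0)`, which is nonincreasing, stays in `[0, x₀]`, is dominated by
`|X^ξ_t|`, and satisfies `|η_t| ≤ |ξ_t|`. -/
theorem improved_strategy_structure (μ : Measure ℝ) [NullSingletonClass μ] [IsFiniteMeasureOnCompacts μ]
    (hμsupp : μ (Iio (0:ℝ)) = 0)
    (ξ : ℝ → ℝ) (hξm : Measurable ξ)
    (hξint : ∀ t : ℝ, 0 ≤ t → IntegrableOn ξ (Icc (0:ℝ) t) μ)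
    (x₀ : ℝ) (hx₀ : 0 < x₀)
    (Xξ G η Xη : ℝ → ℝ)
    (hXξ : ∀ t, Xξ t = x₀ + ∫ s in Icc (0:ℝ) t, ξ s ∂μ)
    (hG : ∀ t, G t = ∫ s in Icc (0:ℝ) t, max (-ξ s) 0 ∂μ)
    (hη : ∀ t, η t = if G t ≤ x₀ then -(max (-ξ t) 0) else 0)
    (hXη : ∀ t, Xη t = x₀ + ∫ s in Icc (0:ℝ) t, η s ∂μ) :
    AntitoneOn Xη (Ici (0:ℝ)) ∧
    ∀ t : ℝ, 0 ≤ t →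
      Xη t = max (x₀ - G t) 0 ∧
      (0 ≤ Xη t ∧ Xη t ≤ x₀) ∧
      Xη t ≤ |Xξ t| ∧
      |η t| ≤ |ξ t| := by
  classical
  have hf_nonneg : ∀ s, (0:ℝ) ≤ max (-ξ s) 0 := fun s => le_max_right _ _
  have hfint : ∀ t : ℝ, IntegrableOn (fun s => max (-ξ s) 0) (Icc (0:ℝ) t) μ := by
    intro t
    rcases le_or_gt 0 t with ht | ht
    · exact (hξint t ht).neg_part
    · rw [Icc_eq_empty (not_le.mpr ht)]
      exact integrableOn_empty
  have hGneg : ∀ s : ℝ, s < 0 → G s = 0 := by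
    intro s hs
    rw [hG, Icc_eq_empty (not_le.mpr hs)]
    simp
  have hGnonneg : ∀ s, 0 ≤ G s := by
    intro s
    rw [hG]
    exact setIntegral_nonneg measurableSet_Icc fun x _ => hf_nonneg x
  have hGmono : Monotone G := by
    intro a b hab
    rcases le_or_gt 0 a with ha | ha
    · rw [hG a, hG b]
      exact setIntegral_mono_set (hfint b) (ae_of_all _ fun s => hf_nonneg s)
        (HasSubset.Subset.eventuallyLE (Icc_subset_Icc_right hab))
    · rw [hGneg a ha]
      exact hGnonneg b
  have hG0 : G 0 = 0 := by
    rw [hG, Icc_self]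
    have h0 : μ.restrict ({0} : Set ℝ) = 0 := by
      rw [Measure.restrict_eq_zero]; exact measure_singleton 0
    rw [h0, integral_zero_measure]
  -- left limit
  have hton : ∀ τ : ℝ, Tendsto (fun n : ℕ => G (τ - 1/(n+1))) atTop (𝓝 (G τ)) := by
    intro τ
    have hmono : Monotone (fun n : ℕ => Icc (0:ℝ) (τ - 1/(n+1))) := by
      intro n m hnm
      apply Icc_subset_Icc_right
      have h1 : (1:ℝ)/(m+1) ≤ 1/(n+1) := by
        apply one_div_le_one_div_of_le (by positivity)
        have : (n:ℝ) ≤ m := Nat.cast_le.mpr hnm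
        linarith
      linarith
    have hU : (⋃ n : ℕ, Icc (0:ℝ) (τ - 1/(n+1))) = Ico 0 τ := by
      ext x
      simp only [mem_iUnion, mem_Icc, mem_Ico]
      constructor
      · rintro ⟨n, hx0, hxn⟩
        have : (0:ℝ) < 1/(n+1) := by positivity
        exact ⟨hx0, by linarith⟩
      · rintro ⟨hx0, hxτ⟩
        obtain ⟨n, hn⟩ := exists_nat_one_div_lt (sub_pos.mpr hxτ)
        exact ⟨n, hx0, by push_cast at hn ⊢; linarith⟩
    have hfi : IntegrableOn (fun s => max (-ξ s) 0) (⋃ n : ℕ, Icc (0:ℝ) (τ - 1/(n+1))) μ := by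
      rw [hU]
      exact (hfint τ).mono_set Ico_subset_Icc_self
    have h := tendsto_setIntegral_of_monotone (fun n => measurableSet_Icc) hmono hfi
    rw [hU] at h
    have heq : (∫ s in Ico (0:ℝ) τ, max (-ξ s) 0 ∂μ) = G τ := by
      rw [hG τ]
      exact setIntegral_congr_set Ico_ae_eq_Icc
    rw [heq] at h
    refine h.congr fun n => ?_
    rw [hG]
  -- right limit
  have hton' : ∀ τ c : ℝ, 0 < c → Tendsto (fun n : ℕ => G (τ + c/(n+1))) atTop (𝓝 (G τ)) := by
    intro τ c hc
    have hanti : Antitone (fun n : ℕ => Icc (0:ℝ) (τ + c/(n+1))) := by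
      intro n m hnm
      apply Icc_subset_Icc_right
      have h1 : c/(m+1) ≤ c/(n+1) := by
        apply div_le_div_of_nonneg_left hc.le (by positivity)
        have : (n:ℝ) ≤ m := Nat.cast_le.mpr hnm
        linarith
      linarith
    have hI : (⋂ n : ℕ, Icc (0:ℝ) (τ + c/(n+1))) = Icc 0 τ := by
      ext x
      simp only [mem_iInter, mem_Icc]
      constructor
      · intro h
        refine ⟨(h 0).1, ?_⟩
        by_contra hx
        push_neg at hx
        obtain ⟨n, hn⟩ := exists_nat_one_div_lt (div_pos (sub_pos.mpr hx) hc)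
        have h2 : c/((n:ℝ)+1) < x - τ := by
          have h3 := (lt_div_iff₀ hc).mp hn
          have e : c/((n:ℝ)+1) = 1/((n:ℝ)+1) * c := by ring
          rw [e]; exact h3
        have := (h n).2
        linarith
      · rintro ⟨hx0, hxτ⟩ n
        have : (0:ℝ) < c/(n+1) := by positivity
        exact ⟨hx0, by linarith⟩
    have h := tendsto_setIntegral_of_antitone (fun n => measurableSet_Icc) hanti
      ⟨0, hfint _⟩
    rw [hI] at h
    rw [← hG τ] at h
    refine h.congr fun n => ?_
    rw [hG]
  -- key formula
  have key : ∀ t : ℝ, 0 ≤ t → Xη t = max (x₀ - G t) 0 := by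
    intro t ht
    rcases le_or_gt (G t) x₀ with hcase | hcase
    · have heq : EqOn η (fun s => -(max (-ξ s) 0)) (Icc 0 t) := by
        intro s hs
        rw [hη, if_pos (le_trans (hGmono hs.2) hcase)]
      rw [hXη, setIntegral_congr_fun measurableSet_Icc heq, integral_neg, ← hG,
        max_eq_left (by linarith)]
      ring
    · set A := {s : ℝ | s ∈ Icc (0:ℝ) t ∧ G s ≤ x₀} with hA
      have h0A : (0:ℝ) ∈ A := ⟨⟨le_refl 0, ht⟩, by rw [hG0]; exact hx₀.le⟩
      have hbdd : BddAbove A := ⟨t, fun s hs => hs.1.2⟩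
      set τ := sSup A with hτdef
      have hτ0 : 0 ≤ τ := le_csSup hbdd h0A
      have hτt : τ ≤ t := csSup_le ⟨0, h0A⟩ fun s hs => hs.1.2
      have hless : ∀ s : ℝ, s < τ → G s ≤ x₀ := by
        intro s hs
        obtain ⟨s', hs'A, hss'⟩ := exists_lt_of_lt_csSup ⟨0, h0A⟩ hs
        exact le_trans (hGmono hss'.le) hs'A.2
      have hGτ_le : G τ ≤ x₀ := by
        refine le_of_tendsto (hton τ) (Eventually.of_forall fun n => hless _ ?_)
        have : (0:ℝ) < 1/(n+1) := by positivity
        linarith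
      have hτlt : τ < t := lt_of_le_of_ne hτt fun hh => absurd hGτ_le (by rw [hh]; exact not_le.mpr hcase)
      have hgt : ∀ s : ℝ, τ < s → s ≤ t → x₀ < G s := by
        intro s h1 h2
        by_contra hle
        push_neg at hle
        have hmem : s ∈ A := ⟨⟨le_trans hτ0 h1.le, h2⟩, hle⟩
        exact absurd (le_csSup hbdd hmem) (not_le.mpr h1)
      have hGτ_ge : x₀ ≤ G τ := by
        refine ge_of_tendsto (hton' τ (t - τ) (sub_pos.mpr hτlt))
          (Eventually.of_forall fun n => (hgt _ ?_ ?_).le)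
        · have : (0:ℝ) < (t - τ)/(n+1) := div_pos (sub_pos.mpr hτlt) (by positivity)
          linarith
        · have h1 : (t - τ)/(n+1) ≤ t - τ := by
            apply div_le_self (by linarith)
            have : (0:ℝ) ≤ n := Nat.cast_nonneg n
            linarith
          linarith
      have hGτ : G τ = x₀ := le_antisymm hGτ_le hGτ_ge
      have heq : EqOn η ((Icc (0:ℝ) τ).indicator fun s => -(max (-ξ s) 0)) (Icc 0 t) := by
        intro s hs
        rcases le_or_gt s τ with h | h
        · rw [hη, if_pos (le_trans (hGmono h) hGτ.le)]
          exact (indicator_of_mem (show s ∈ Icc (0:ℝ) τ from ⟨hs.1, h⟩) (fun s => -(max (-ξ s) 0))).symm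
        · rw [hη, if_neg (not_le.mpr (hgt s h hs.2))]
          exact (indicator_of_notMem (fun hmem : s ∈ Icc (0:ℝ) τ => absurd hmem.2 (not_le.mpr h)) (fun s => -(max (-ξ s) 0))).symm
      rw [hXη, setIntegral_congr_fun measurableSet_Icc heq,
        setIntegral_indicator measurableSet_Icc,
        inter_eq_self_of_subset_right (Icc_subset_Icc_right hτt),
        integral_neg, ← hG, hGτ, max_eq_right (by linarith)]
      ring
  refine ⟨?_, ?_⟩
  · intro a ha b hb hab
    rw [key a ha, key b hb]
    exact max_le_max (sub_le_sub_left (hGmono hab) x₀) le_rfl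
  · intro t ht
    refine ⟨key t ht, ⟨?_, ?_⟩, ?_, ?_⟩
    · rw [key t ht]; exact le_max_right _ _
    · rw [key t ht]
      exact max_le (by linarith [hGnonneg t]) hx₀.le
    · rcases le_or_gt (G t) x₀ with h | h
      · have h1 : Xη t = x₀ - G t := by rw [key t ht, max_eq_left (by linarith)]
        have h2 : x₀ - G t ≤ Xξ t := by
          rw [hXξ, hG]
          have h3 : (∫ s in Icc (0:ℝ) t, -(max (-ξ s) 0) ∂μ) ≤ ∫ s in Icc (0:ℝ) t, ξ s ∂μ := by
            refine setIntegral_mono_on (hfint t).neg (hξint t ht) measurableSet_Icc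
              fun s _ => ?_
            have := le_max_left (-ξ s) 0
            linarith
          rw [integral_neg] at h3
          linarith
        rw [h1]
        exact le_trans h2 (le_abs_self _)
      · rw [key t ht, max_eq_right (by linarith)]
        exact abs_nonneg _
    · rw [hη]
      split
      · rw [abs_neg, abs_of_nonneg (hf_nonneg t)]
        exact max_le (neg_le_abs _) (abs_nonneg _)
      · simp
end

section
/- Cost improvement by monotone strategies: Let T > 0, p ≥ 2 real, let μ be a finite Borel measure on [0,T] with no atoms, let φ : [0,T] → [0,∞) be bounded measurable, and ρ ≥ 0. Let x₀ > 0 and let ξ : [0,T] → ℝ be measurable with ∫_{[0,T]} |ξ|^p dμ < ∞. Define X^ζ_t := x₀ + ∫_{[0,t]} ζ dμ and J(ζ) := ∫_{[0,T]} |ζ_t|^p μ(dt) + ∫_0^T φ(t)·|X^ζ_t|^p dt + ρ·|X^ζ_T|^p, and set η_t := −ξ⁻_t·1_{\{∫_{[0,t]} ξ⁻ dμ ≤ x₀\}}. Then J(η) ≤ J(ξ); moreover, if X^ξ is not nonincreasing on [0,T] or X^ξ_t < 0 for some t ∈ [0,T], then J(η) < J(ξ). -/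
open MeasureTheory Set Filter Topology

/-- Integral of a nonneg integrable function over a shrinking interval `Ioc (τ-1/(n+1)) τ`
tends to `0` when `μ` has no atoms. -/
lemma aux_tendsto_left (μ : Measure ℝ) [NullSingletonClass μ] (g : ℝ → ℝ)
    (hgm : Measurable g) (hg0 : ∀ u, 0 ≤ g u) (hgi : Integrable g μ) (τ : ℝ) :
    Tendsto (fun n : ℕ => ∫ u in Ioc (τ - 1/(n+1)) τ, g u ∂μ) atTop (𝓝 0) := by
  have hlim : Tendsto (fun n : ℕ => ∫ u, (Ioc (τ - 1/(n+1)) τ).indicator g u ∂μ) atTop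
      (𝓝 (∫ u, ({τ} : Set ℝ).indicator g u ∂μ)) := by
    apply tendsto_integral_of_dominated_convergence g
      (fun n => (hgm.indicator measurableSet_Ioc).aestronglyMeasurable) hgi
    · intro n
      refine ae_of_all _ fun u => ?_
      rw [Real.norm_eq_abs, abs_of_nonneg (indicator_nonneg (fun x _ => hg0 x) u)]
      exact indicator_le_self' (fun x _ => hg0 x) u
    · refine ae_of_all _ fun x => ?_
      rcases eq_or_ne x τ with rfl | hx
      · have : ∀ n : ℕ, (Ioc (x - 1/(n+1)) x).indicator g x = g x := by
          intro n
          refine indicator_of_mem (mem_Ioc.mpr ⟨?_, le_refl x⟩) g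
          have : (0:ℝ) < 1/(n+1) := by positivity
          linarith
        simp only [this, indicator_of_mem (mem_singleton x) g]
        exact tendsto_const_nhds
      · rw [indicator_of_notMem (by simpa using hx)]
        rcases lt_or_gt_of_ne hx with hlt | hgt
        · obtain ⟨N, hN⟩ := exists_nat_one_div_lt (show (0:ℝ) < τ - x by linarith)
          refine tendsto_const_nhds.congr' ?_
          filter_upwards [eventually_ge_atTop N] with n hn
          refine (indicator_of_notMem ?_ g).symm
          intro hmem
          have h1 : (1:ℝ)/(n+1) ≤ 1/(N+1) := by
            apply one_div_le_one_div_of_le (by positivity)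
            have : (N:ℝ) ≤ n := Nat.cast_le.mpr hn
            linarith
          have := hmem.1
          linarith
        · refine tendsto_const_nhds.congr' ?_
          filter_upwards with n
          exact (indicator_of_notMem (fun hmem => absurd hmem.2 (not_le.mpr hgt)) g).symm
  have h0 : (∫ u, ({τ} : Set ℝ).indicator g u ∂μ) = 0 := by
    rw [integral_indicator (measurableSet_singleton τ),
      Measure.restrict_eq_zero.mpr (measure_singleton τ), integral_zero_measure]
  rw [h0] at hlim
  refine hlim.congr fun n => ?_
  rw [integral_indicator measurableSet_Ioc]

lemma aux_tendsto_right (μ : Measure ℝ) [NullSingletonClass μ] (g : ℝ → ℝ)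
    (hgm : Measurable g) (hg0 : ∀ u, 0 ≤ g u) (hgi : Integrable g μ) (τ : ℝ) :
    Tendsto (fun n : ℕ => ∫ u in Ioc τ (τ + 1/(n+1)), g u ∂μ) atTop (𝓝 0) := by
  have hlim : Tendsto (fun n : ℕ => ∫ u, (Ioc τ (τ + 1/(n+1))).indicator g u ∂μ) atTop
      (𝓝 (∫ u, (0:ℝ → ℝ) u ∂μ)) := by
    apply tendsto_integral_of_dominated_convergence g
      (fun n => (hgm.indicator measurableSet_Ioc).aestronglyMeasurable) hgi
    · intro n
      refine ae_of_all _ fun u => ?_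
      rw [Real.norm_eq_abs, abs_of_nonneg (indicator_nonneg (fun x _ => hg0 x) u)]
      exact indicator_le_self' (fun x _ => hg0 x) u
    · refine ae_of_all _ fun x => ?_
      rcases le_or_gt x τ with hle | hgt
      · refine tendsto_const_nhds.congr' ?_
        filter_upwards with n
        exact (indicator_of_notMem (fun hmem => absurd hle (not_le.mpr hmem.1)) g).symm
      · obtain ⟨N, hN⟩ := exists_nat_one_div_lt (show (0:ℝ) < x - τ by linarith)
        refine tendsto_const_nhds.congr' ?_
        filter_upwards [eventually_ge_atTop N] with n hn
        refine (indicator_of_notMem ?_ g).symm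
        intro hmem
        have h1 : (1:ℝ)/(n+1) ≤ 1/(N+1) := by
          apply one_div_le_one_div_of_le (by positivity)
          have : (N:ℝ) ≤ n := Nat.cast_le.mpr hn
          linarith
        have := hmem.2
        linarith
  simp only [Pi.zero_apply, integral_zero] at hlim
  refine hlim.congr fun n => ?_
  rw [integral_indicator measurableSet_Ioc]
/-- Cost improvement by monotone strategies: the strategy `η` executing only the selling
part of `ξ` and stopping once cumulative sales reach `x₀` satisfies `J(η) ≤ J(ξ)`, with
strict inequality whenever the inventory `X^ξ` is not nonincreasing on `[0,T]` or becomes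
negative at some time in `[0,T]`. -/
theorem monotone_strategy_improves (T p : ℝ) (hT : 0 < T) (hp : 2 ≤ p)
    (μ : Measure ℝ) [IsFiniteMeasure μ] [NullSingletonClass μ] (hμsupp : μ (Icc (0:ℝ) T)ᶜ = 0)
    (φ : ℝ → ℝ) (hφm : Measurable φ) (hφ0 : ∀ t ∈ Icc (0:ℝ) T, 0 ≤ φ t)
    (Cφ : ℝ) (hφb : ∀ t ∈ Icc (0:ℝ) T, φ t ≤ Cφ)
    (ρ : ℝ) (hρ : 0 ≤ ρ)
    (x₀ : ℝ) (hx₀ : 0 < x₀)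
    (ξ : ℝ → ℝ) (hξm : Measurable ξ)
    (hξint : Integrable (fun t => |ξ t| ^ p) (μ.restrict (Icc (0:ℝ) T)))
    (η : ℝ → ℝ)
    (hη : ∀ t, η t = if (∫ s in Icc (0:ℝ) t, max (-ξ s) 0 ∂μ) ≤ x₀
      then -(max (-ξ t) 0) else 0)
    (X : (ℝ → ℝ) → ℝ → ℝ)
    (hX : ∀ ζ t, X ζ t = x₀ + ∫ s in Icc (0:ℝ) t, ζ s ∂μ)
    (J : (ℝ → ℝ) → ℝ)
    (hJ : ∀ ζ : ℝ → ℝ, J ζ = (∫ t in Icc (0:ℝ) T, |ζ t| ^ p ∂μ)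
      + (∫ t in (0:ℝ)..T, φ t * |X ζ t| ^ p) + ρ * |X ζ T| ^ p) :
    J η ≤ J ξ ∧
      ((¬ AntitoneOn (X ξ) (Icc (0:ℝ) T) ∨ ∃ t ∈ Icc (0:ℝ) T, X ξ t < 0) →
        J η < J ξ) := by
  classical
  have hp0 : (0:ℝ) ≤ p := by linarith
  have hp1 : (1:ℝ) ≤ p := by linarith
  have hpne : p ≠ 0 := by positivity
  set g : ℝ → ℝ := fun u => max (-ξ u) 0 with hgdef
  set A : ℝ → ℝ := fun t => ∫ u in Icc (0:ℝ) t, g u ∂μ with hAdef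
  have hηA : ∀ t, η t = if A t ≤ x₀ then -(g t) else 0 := fun t => by
    simp only [hη, hAdef, hgdef]
  have hgm : Measurable g := (hξm.neg.max measurable_const)
  have hg0 : ∀ u, 0 ≤ g u := fun u => le_max_right _ _
  have hgabs : ∀ u, g u ≤ |ξ u| := fun u => max_le (neg_le_abs _) (abs_nonneg _)
  -- μ lives on [0,T]
  have hrestrict : μ.restrict (Icc (0:ℝ) T) = μ := by
    apply Measure.restrict_eq_self_of_ae_mem
    rw [Filter.eventually_iff, mem_ae_iff]
    exact hμsupp
  have hξp_int : Integrable (fun t => |ξ t| ^ p) μ := by rwa [hrestrict] at hξint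
  -- integrability of |ξ|
  have hbound : ∀ u, |ξ u| ≤ 1 + |ξ u| ^ p := by
    intro u
    rcases le_total (|ξ u|) 1 with h | h
    · have : (0:ℝ) ≤ |ξ u| ^ p := Real.rpow_nonneg (abs_nonneg _) p
      linarith
    · have h2 : |ξ u| ≤ |ξ u| ^ p := by
        calc |ξ u| = |ξ u| ^ (1:ℝ) := (Real.rpow_one _).symm
        _ ≤ |ξ u| ^ p := Real.rpow_le_rpow_of_exponent_le h hp1
      linarith
  have habs_int : Integrable (fun u => |ξ u|) μ := by
    refine ((integrable_const (1:ℝ)).add hξp_int).mono' hξm.abs.aestronglyMeasurable ?_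
    refine ae_of_all _ fun u => ?_
    rw [Real.norm_eq_abs, abs_abs]
    exact hbound u
  have hg_int : Integrable g μ := by
    refine habs_int.mono' hgm.aestronglyMeasurable (ae_of_all _ fun u => ?_)
    rw [Real.norm_eq_abs, abs_of_nonneg (hg0 u)]
    exact hgabs u
  have hξ_int : Integrable ξ μ := by
    refine habs_int.mono' hξm.aestronglyMeasurable (ae_of_all _ fun u => le_of_eq ?_)
    rw [Real.norm_eq_abs]
  -- facts about A
  have hAmono : Monotone A := by
    intro s t hst
    exact setIntegral_mono_set hg_int.integrableOn (ae_of_all _ hg0)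
      (HasSubset.Subset.eventuallyLE (Icc_subset_Icc_right hst))
  have hA0 : ∀ t, 0 ≤ A t := fun t => setIntegral_nonneg measurableSet_Icc fun u _ => hg0 u
  have hAm : Measurable A := hAmono.measurable
  have hηfun : η = fun u => if A u ≤ x₀ then -(g u) else 0 := funext hηA
  have hηm : Measurable η := by
    rw [hηfun]
    exact Measurable.ite (measurableSet_le hAm measurable_const) hgm.neg measurable_const
  have hη_int : Integrable η μ := by
    refine hg_int.mono' hηm.aestronglyMeasurable (ae_of_all _ fun u => ?_)
    rw [hηA u]
    split_ifs
    · rw [norm_neg, Real.norm_eq_abs, abs_of_nonneg (hg0 u)]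
    · simpa using hg0 u
  -- splitting lemma
  have hsplit : ∀ (f : ℝ → ℝ), Integrable f μ → ∀ a b : ℝ, 0 ≤ a → a ≤ b →
      (∫ u in Icc (0:ℝ) b, f u ∂μ)
        = (∫ u in Icc (0:ℝ) a, f u ∂μ) + ∫ u in Ioc a b, f u ∂μ := by
    intro f hf a b h0a hab
    have hdisj : Disjoint (Icc (0:ℝ) a) (Ioc a b) := by
      refine Set.disjoint_left.mpr ?_
      rintro x ⟨_, hxa⟩ ⟨hax, _⟩
      exact absurd hax (not_lt.mpr hxa)
    have := setIntegral_union hdisj measurableSet_Ioc hf.integrableOn hf.integrableOn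
      (f := f) (μ := μ)
    rwa [Icc_union_Ioc_eq_Icc h0a hab] at this
  have hA_zero : A 0 = 0 := by
    have : μ (Icc (0:ℝ) 0) = 0 := by rw [Icc_self]; exact measure_singleton 0
    simp only [hAdef]
    rw [Measure.restrict_eq_zero.mpr this, integral_zero_measure]
  -- value of ∫ η over [0,t]
  have hBval : ∀ t : ℝ, (∫ u in Icc (0:ℝ) t, η u ∂μ) = -(min (A t) x₀) := by
    intro t
    rcases le_or_gt (A t) x₀ with hc | hc
    · rw [min_eq_left hc]
      have heq : ∀ u ∈ Icc (0:ℝ) t, η u = -(g u) := by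
        intro u hu
        rw [hηA u, if_pos (le_trans (hAmono hu.2) hc)]
      rw [setIntegral_congr_fun measurableSet_Icc heq, integral_neg]
    · rw [min_eq_right hc.le]
      have ht0 : 0 ≤ t := by
        by_contra h
        push_neg at h
        have : A t = 0 := by
          simp only [hAdef]
          rw [Icc_eq_empty (not_le.mpr h), Measure.restrict_empty, integral_zero_measure]
        rw [this] at hc
        linarith
      set S : Set ℝ := {s : ℝ | 0 ≤ s ∧ s ≤ t ∧ A s ≤ x₀} with hSdef
      have hS0 : (0:ℝ) ∈ S := ⟨le_refl 0, ht0, by rw [hA_zero]; exact hx₀.le⟩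
      have hSne : S.Nonempty := ⟨0, hS0⟩
      have hSbdd : BddAbove S := ⟨t, fun s hs => hs.2.1⟩
      set τ : ℝ := sSup S with hτdef
      have hτ0 : 0 ≤ τ := le_csSup hSbdd hS0
      have hτt : τ ≤ t := csSup_le hSne fun s hs => hs.2.1
      have h1 : ∀ s : ℝ, 0 ≤ s → s < τ → A s ≤ x₀ := by
        intro s h0s hsτ
        obtain ⟨u, huS, hsu⟩ := exists_lt_of_lt_csSup hSne hsτ
        exact le_trans (hAmono hsu.le) huS.2.2
      have h2 : ∀ s : ℝ, τ < s → x₀ < A s := by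
        intro s hs
        by_contra h
        push_neg at h
        rcases le_or_gt s t with h' | h'
        · exact absurd (le_csSup hSbdd ⟨le_trans hτ0 hs.le, h', h⟩) (not_le.mpr hs)
        · exact absurd h (not_le.mpr (lt_of_lt_of_le hc (hAmono h'.le)))
      have hAτ_le : A τ ≤ x₀ := by
        rcases eq_or_lt_of_le hτ0 with heq | hpos
        · rw [← heq, hA_zero]; exact hx₀.le
        · have key : ∀ n : ℕ, A τ ≤ x₀ + ∫ u in Ioc (τ - 1/(n+1)) τ, g u ∂μ := by
            intro n
            have hpos1 : (0:ℝ) < 1/((n:ℝ)+1) := by positivity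
            set s := max (τ - 1/((n:ℝ)+1)) 0 with hsdef
            have hs0 : 0 ≤ s := le_max_right _ _
            have hsτ : s < τ := max_lt (by linarith) hpos
            have hsp := hsplit g hg_int s τ hs0 hsτ.le
            have hAs : A s ≤ x₀ := h1 s hs0 hsτ
            have hmono : (∫ u in Ioc s τ, g u ∂μ) ≤ ∫ u in Ioc (τ - 1/(n+1)) τ, g u ∂μ := by
              refine setIntegral_mono_set hg_int.integrableOn (ae_of_all _ hg0) ?_
              exact HasSubset.Subset.eventuallyLE (Ioc_subset_Ioc_left (le_max_left _ _))
            have : A τ = A s + ∫ u in Ioc s τ, g u ∂μ := hsp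
            linarith
          have htend : Tendsto (fun n : ℕ => x₀ + ∫ u in Ioc (τ - 1/(n+1)) τ, g u ∂μ)
              atTop (𝓝 x₀) := by
            have := tendsto_const_nhds (x := x₀) (f := atTop (α := ℕ)) |>.add
              (aux_tendsto_left μ g hgm hg0 hg_int τ)
            simpa using this
          exact ge_of_tendsto' htend key
      have hAτ_ge : x₀ ≤ A τ := by
        have key : ∀ n : ℕ, x₀ ≤ A τ + ∫ u in Ioc τ (τ + 1/(n+1)), g u ∂μ := by
          intro n
          have hpos1 : (0:ℝ) < 1/((n:ℝ)+1) := by positivity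
          have hsp := hsplit g hg_int τ (τ + 1/(n+1)) hτ0 (by linarith)
          have h3 : A (τ + 1/(n+1)) = A τ + ∫ u in Ioc τ (τ + 1/(n+1)), g u ∂μ := hsp
          have h4 := h2 (τ + 1/(n+1)) (by linarith)
          linarith
        have htend : Tendsto (fun n : ℕ => A τ + ∫ u in Ioc τ (τ + 1/(n+1)), g u ∂μ)
            atTop (𝓝 (A τ)) := by
          have := tendsto_const_nhds (x := A τ) (f := atTop (α := ℕ)) |>.add
            (aux_tendsto_right μ g hgm hg0 hg_int τ)
          simpa using this
        exact ge_of_tendsto' htend key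
      have hAτ : A τ = x₀ := le_antisymm hAτ_le hAτ_ge
      have hI1 : (∫ u in Icc (0:ℝ) τ, η u ∂μ) = -(A τ) := by
        have heq : ∀ u ∈ Icc (0:ℝ) τ, η u = -(g u) := by
          intro u hu
          rw [hηA u, if_pos (by rw [← hAτ] at *; exact hAmono hu.2)]
        rw [setIntegral_congr_fun measurableSet_Icc heq, integral_neg]
      have hI2 : (∫ u in Ioc τ t, η u ∂μ) = 0 := by
        have heq : ∀ u ∈ Ioc τ t, η u = 0 := by
          intro u hu
          rw [hηA u, if_neg (not_le.mpr (h2 u hu.1))]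
        rw [setIntegral_congr_fun measurableSet_Ioc heq, integral_zero]
      rw [hsplit η hη_int τ t hτ0 hτt, hI1, hI2, hAτ]
      ring
  -- inventory formulas
  have hXη : ∀ t, X η t = x₀ - min (A t) x₀ := by
    intro t
    rw [hX, hBval]; ring
  have hXξ_ge : ∀ t, x₀ - A t ≤ X ξ t := by
    intro t
    have hmono : (∫ u in Icc (0:ℝ) t, -(g u) ∂μ) ≤ ∫ u in Icc (0:ℝ) t, ξ u ∂μ :=
      setIntegral_mono hg_int.neg.integrableOn hξ_int.integrableOn
        (fun u => by have h := le_max_left (-ξ u) 0; simp only [hgdef]; linarith)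
    rw [integral_neg] at hmono
    have hneg : -(A t) ≤ ∫ u in Icc (0:ℝ) t, ξ u ∂μ := hmono
    rw [hX]
    linarith
  have hXη0 : ∀ t, 0 ≤ X η t := by
    intro t; rw [hXη]
    have := min_le_right (A t) x₀; linarith
  have hXabs : ∀ t, |X η t| ≤ |X ξ t| := by
    intro t
    rw [abs_of_nonneg (hXη0 t), hXη]
    rcases le_total (A t) x₀ with h | h
    · rw [min_eq_left h]
      exact (hXξ_ge t).trans (le_abs_self _)
    · rw [min_eq_right h]
      simp [abs_nonneg]
  have hηabs : ∀ t, |η t| ≤ |ξ t| := by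
    intro t
    rw [hηA t]
    split_ifs
    · rw [abs_neg, abs_of_nonneg (hg0 t)]; exact hgabs t
    · simp [abs_nonneg]
  -- term 1 comparison
  have hrpm : ∀ (f : ℝ → ℝ), Measurable f → Measurable (fun t => |f t| ^ p) :=
    fun f hf => (Real.continuous_rpow_const hp0).measurable.comp hf.abs
  have hηp_int : Integrable (fun t => |η t| ^ p) μ := by
    refine hξp_int.mono' (hrpm η hηm).aestronglyMeasurable (ae_of_all _ fun u => ?_)
    rw [Real.norm_eq_abs, abs_of_nonneg (Real.rpow_nonneg (abs_nonneg _) p)]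
    exact Real.rpow_le_rpow (abs_nonneg _) (hηabs u) hp0
  have hT1 : (∫ t in Icc (0:ℝ) T, |η t| ^ p ∂μ) ≤ ∫ t in Icc (0:ℝ) T, |ξ t| ^ p ∂μ :=
    setIntegral_mono hηp_int.integrableOn hξp_int.integrableOn
      (fun u => Real.rpow_le_rpow (abs_nonneg _) (hηabs u) hp0)
  -- positive part and measurability of inventories
  have hpos_int : Integrable (fun u => max (ξ u) 0) μ := by
    refine habs_int.mono' (hξm.max measurable_const).aestronglyMeasurable
      (ae_of_all _ fun u => ?_)
    rw [Real.norm_eq_abs, abs_of_nonneg (le_max_right _ _)]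
    exact max_le (le_abs_self _) (abs_nonneg _)
  have hPmono : Monotone (fun t => ∫ u in Icc (0:ℝ) t, max (ξ u) 0 ∂μ) := by
    intro s t hst
    exact setIntegral_mono_set hpos_int.integrableOn (ae_of_all _ fun u => le_max_right _ _)
      (HasSubset.Subset.eventuallyLE (Icc_subset_Icc_right hst))
  have hXint_eq : ∀ t, (∫ u in Icc (0:ℝ) t, ξ u ∂μ)
      = (∫ u in Icc (0:ℝ) t, max (ξ u) 0 ∂μ) - ∫ u in Icc (0:ℝ) t, g u ∂μ := by
    intro t
    rw [← integral_sub hpos_int.integrableOn hg_int.integrableOn]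
    refine setIntegral_congr_fun measurableSet_Icc fun u _ => ?_
    simp only [hgdef]
    exact (max_zero_sub_max_neg_zero_eq_self (ξ u)).symm
  have hXξm : Measurable (X ξ) := by
    have hfe : X ξ = fun t => x₀ + ((∫ u in Icc (0:ℝ) t, max (ξ u) 0 ∂μ)
        - ∫ u in Icc (0:ℝ) t, g u ∂μ) := by
      funext t; rw [hX, hXint_eq]
    rw [hfe]
    exact measurable_const.add (hPmono.measurable.sub hAmono.measurable)
  have hXηm : Measurable (X η) := by
    have hfe : X η = fun t => x₀ - min (A t) x₀ := funext hXη
    rw [hfe]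
    exact measurable_const.sub (hAm.min measurable_const)
  -- uniform bounds on inventories
  set M : ℝ := ∫ u, |ξ u| ∂μ with hMdef
  have hM0 : 0 ≤ M := integral_nonneg fun u => abs_nonneg _
  have hXbd : ∀ (ζ : ℝ → ℝ), Integrable ζ μ → (∀ u, |ζ u| ≤ |ξ u|) →
      ∀ t, |X ζ t| ≤ x₀ + M := by
    intro ζ hζi hζb t
    rw [hX]
    have h1 : |∫ u in Icc (0:ℝ) t, ζ u ∂μ| ≤ ∫ u in Icc (0:ℝ) t, |ζ u| ∂μ := by
      simpa [Real.norm_eq_abs] using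
        norm_integral_le_integral_norm (μ := μ.restrict (Icc (0:ℝ) t)) ζ
    have h3 : (∫ u in Icc (0:ℝ) t, |ζ u| ∂μ) ≤ ∫ u in Icc (0:ℝ) t, |ξ u| ∂μ :=
      setIntegral_mono hζi.abs.integrableOn habs_int.integrableOn hζb
    have h4 : (∫ u in Icc (0:ℝ) t, |ξ u| ∂μ) ≤ M :=
      setIntegral_le_integral habs_int (ae_of_all _ fun u => abs_nonneg _)
    calc |x₀ + ∫ u in Icc (0:ℝ) t, ζ u ∂μ|
        ≤ |x₀| + |∫ u in Icc (0:ℝ) t, ζ u ∂μ| := abs_add_le _ _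
      _ ≤ x₀ + M := by rw [abs_of_pos hx₀]; linarith
  have hXξbd : ∀ t, |X ξ t| ≤ x₀ + M := hXbd ξ hξ_int fun u => le_refl _
  have hXηbd : ∀ t, |X η t| ≤ x₀ + M := hXbd η hη_int hηabs
  -- interval integrability of the running-cost terms
  haveI hfin : IsFiniteMeasure (volume.restrict (Ioc (0:ℝ) T)) := by
    constructor
    rw [Measure.restrict_apply_univ, Real.volume_Ioc]
    exact ENNReal.ofReal_lt_top
  have hII : ∀ (ζ : ℝ → ℝ), Measurable (X ζ) → (∀ t, |X ζ t| ≤ x₀ + M) →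
      IntervalIntegrable (fun t => φ t * |X ζ t| ^ p) volume 0 T := by
    intro ζ hm hb
    rw [intervalIntegrable_iff, uIoc_of_le hT.le]
    constructor
    · exact ((hφm.mul (hrpm (X ζ) hm)).aestronglyMeasurable).restrict
    · apply HasFiniteIntegral.of_bounded (C := max Cφ 0 * (x₀ + M) ^ p)
      rw [ae_restrict_iff' measurableSet_Ioc]
      refine ae_of_all _ fun u hu => ?_
      have hu' : u ∈ Icc (0:ℝ) T := ⟨hu.1.le, hu.2⟩
      rw [Real.norm_eq_abs, abs_mul, abs_of_nonneg (hφ0 u hu'),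
        abs_of_nonneg (Real.rpow_nonneg (abs_nonneg _) p)]
      refine mul_le_mul (le_max_of_le_left (hφb u hu'))
        (Real.rpow_le_rpow (abs_nonneg _) (hb u) hp0)
        (Real.rpow_nonneg (abs_nonneg _) p) (le_max_right _ _)
  have hT2 : (∫ t in (0:ℝ)..T, φ t * |X η t| ^ p) ≤ ∫ t in (0:ℝ)..T, φ t * |X ξ t| ^ p := by
    refine intervalIntegral.integral_mono_on hT.le (hII η hXηm hXηbd) (hII ξ hXξm hXξbd)
      fun u hu => ?_
    exact mul_le_mul_of_nonneg_left
      (Real.rpow_le_rpow (abs_nonneg _) (hXabs u) hp0) (hφ0 u hu)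
  have hT3 : ρ * |X η T| ^ p ≤ ρ * |X ξ T| ^ p :=
    mul_le_mul_of_nonneg_left (Real.rpow_le_rpow (abs_nonneg _) (hXabs T) hp0) hρ
  -- strict-improvement helper
  have main : ∀ W : Set ℝ, MeasurableSet W → W ⊆ Icc (0:ℝ) T → 0 < μ W →
      (∀ u ∈ W, η u = 0 ∧ 0 < |ξ u|) →
      (∫ t in Icc (0:ℝ) T, |η t| ^ p ∂μ) < ∫ t in Icc (0:ℝ) T, |ξ t| ^ p ∂μ := by
    intro W hWm hWsub hWpos hWprop
    set h : ℝ → ℝ := fun u => |ξ u| ^ p - |η u| ^ p with hhdef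
    have hh0 : ∀ u, 0 ≤ h u := fun u =>
      sub_nonneg.mpr (Real.rpow_le_rpow (abs_nonneg _) (hηabs u) hp0)
    have hhint : Integrable h μ := hξp_int.sub hηp_int
    have h1 : 0 < ∫ u in W, h u ∂μ := by
      rw [setIntegral_pos_iff_support_of_nonneg_ae (ae_of_all _ hh0) hhint.integrableOn]
      refine lt_of_lt_of_le hWpos (measure_mono fun u hu => ⟨?_, hu⟩)
      obtain ⟨hη0, hξ0⟩ := hWprop u hu
      have heq : h u = |ξ u| ^ p := by
        simp only [hhdef, hη0, abs_zero, Real.zero_rpow hpne, sub_zero]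
      rw [Function.mem_support, heq]
      exact ne_of_gt (Real.rpow_pos_of_pos hξ0 p)
    have h2 : (∫ u in W, h u ∂μ) ≤ ∫ u in Icc (0:ℝ) T, h u ∂μ :=
      setIntegral_mono_set hhint.integrableOn (ae_of_all _ hh0)
        (HasSubset.Subset.eventuallyLE hWsub)
    have h3 := lt_of_lt_of_le h1 h2
    simp only [hhdef] at h3
    rw [integral_sub hξp_int.integrableOn hηp_int.integrableOn] at h3
    linarith
  -- positive-measure set extraction
  have posset : ∀ (G : ℝ → ℝ), Measurable G → Integrable G μ → (∀ u, 0 ≤ G u) →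
      ∀ V : Set ℝ, MeasurableSet V → 0 < (∫ u in V, G u ∂μ) →
      0 < μ (V ∩ {u | 0 < G u}) := by
    intro G hGm hGi hG0 V hVm hpos
    by_contra hcon
    push_neg at hcon
    have hzero : μ (V ∩ {u | 0 < G u}) = 0 := le_zero_iff.mp hcon
    have hae : G =ᵐ[μ.restrict V] (fun _ => (0:ℝ)) := by
      have hres : (μ.restrict V) {u | 0 < G u} = 0 := by
        rw [Measure.restrict_apply (measurableSet_lt measurable_const hGm)]
        rw [Set.inter_comm] at hzero
        exact hzero
      have hnm := measure_eq_zero_iff_ae_notMem.mp hres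
      filter_upwards [hnm] with u hu
      exact le_antisymm (not_lt.mp hu) (hG0 u)
    have hz : (∫ u in V, G u ∂μ) = 0 := by
      have := integral_congr_ae hae
      simpa using this
    linarith
  refine ⟨by rw [hJ, hJ]; exact add_le_add (add_le_add hT1 hT2) hT3, ?_⟩
  intro hcase
  have hT1' : (∫ t in Icc (0:ℝ) T, |η t| ^ p ∂μ) < ∫ t in Icc (0:ℝ) T, |ξ t| ^ p ∂μ := by
    rcases hcase with hna | ⟨t₀, ht₀, hneg⟩
    · -- inventory not nonincreasing
      simp only [AntitoneOn] at hna
      push_neg at hna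
      obtain ⟨s, hs, t, ht, hst, hlt⟩ := hna
      have hIlt : 0 < ∫ u in Ioc s t, ξ u ∂μ := by
        rw [hX, hX] at hlt
        have h2 := hsplit ξ hξ_int s t hs.1 hst
        linarith
      have hGpos : 0 < ∫ u in Ioc s t, max (ξ u) 0 ∂μ :=
        lt_of_lt_of_le hIlt (setIntegral_mono hξ_int.integrableOn hpos_int.integrableOn
          fun u => le_max_left _ _)
      have hW := posset (fun u => max (ξ u) 0) (hξm.max measurable_const) hpos_int
        (fun u => le_max_right _ _) (Ioc s t) measurableSet_Ioc hGpos
      refine main _ (measurableSet_Ioc.inter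
        (measurableSet_lt measurable_const (hξm.max measurable_const))) ?_ hW ?_
      · rintro u ⟨hu1, _⟩
        exact ⟨le_trans hs.1 hu1.1.le, le_trans hu1.2 ht.2⟩
      · rintro u ⟨hu1, hu2⟩
        simp only [mem_setOf_eq] at hu2
        have hξu : 0 < ξ u := by
          rcases lt_max_iff.mp hu2 with h | h
          · exact h
          · exact absurd h (lt_irrefl 0)
        have hgu0 : g u = 0 := max_eq_right (neg_nonpos.mpr hξu.le)
        constructor
        · rw [hηA u]
          split_ifs <;> simp [hgu0]
        · exact abs_pos.mpr (ne_of_gt hξu)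
    · -- inventory becomes negative
      have hI : (∫ u in Icc (0:ℝ) t₀, ξ u ∂μ) < -x₀ := by
        rw [hX] at hneg; linarith
      have hAt₀ : x₀ < A t₀ := by
        have h1 : (∫ u in Icc (0:ℝ) t₀, -(ξ u) ∂μ) ≤ ∫ u in Icc (0:ℝ) t₀, g u ∂μ :=
          setIntegral_mono hξ_int.neg.integrableOn hg_int.integrableOn
            fun u => le_max_left _ _
        rw [integral_neg] at h1
        have h2 : A t₀ = ∫ u in Icc (0:ℝ) t₀, g u ∂μ := rfl
        linarith
      have hB : (∫ u in Icc (0:ℝ) t₀, η u ∂μ) = -x₀ := by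
        rw [hBval, min_eq_right hAt₀.le]
      have hGint : 0 < ∫ u in Icc (0:ℝ) t₀, (g u + η u) ∂μ := by
        rw [integral_add hg_int.integrableOn hη_int.integrableOn, hB]
        have h2 : A t₀ = ∫ u in Icc (0:ℝ) t₀, g u ∂μ := rfl
        linarith
      have hG0 : ∀ u, 0 ≤ g u + η u := by
        intro u
        rw [hηA u]
        split_ifs
        · simp
        · simpa using hg0 u
      have hW := posset (fun u => g u + η u) (hgm.add hηm) (hg_int.add hη_int) hG0
        (Icc 0 t₀) measurableSet_Icc hGint
      refine main _ (measurableSet_Icc.inter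
        (measurableSet_lt measurable_const (hgm.add hηm))) ?_ hW ?_
      · rintro u ⟨hu1, _⟩
        exact ⟨hu1.1, le_trans hu1.2 ht₀.2⟩
      · rintro u ⟨hu1, hu2⟩
        simp only [mem_setOf_eq, Pi.add_apply] at hu2
        rw [hηA u] at hu2
        by_cases hif : A u ≤ x₀
        · rw [if_pos hif] at hu2; simp at hu2
        · have hη0 : η u = 0 := by rw [hηA u, if_neg hif]
          rw [if_neg hif, add_zero] at hu2
          exact ⟨hη0, lt_of_lt_of_le hu2 (hgabs u)⟩
  rw [hJ, hJ]
  linarith [hT1', hT2, hT3]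
end

section
/- Convergence of Lebesgue–Stieltjes integrals with time-changed integrands: Let F and F_n (n ∈ ℕ) be nondecreasing right-continuous functions ℝ → ℝ, with F continuous, and suppose sup_{t ∈ [a,b]} |F_n(t) − F(t)| → 0 as n → ∞ for reals a < b. Let τ_n : ℝ → ℝ be measurable functions with sup_{t ∈ [a,b]} |τ_n(t) − t| → 0 as n → ∞, and let g : ℝ → ℝ be continuous. Then ∫_{(a,b]} g(τ_n(s)) μ_{F_n}(ds) → ∫_{(a,b]} g(s) μ_F(ds) as n → ∞, where μ_F denotes the Lebesgue–Stieltjes measure associated with F. -/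
open MeasureTheory Set Filter

/-- Riemann-sum approximation of a Stieltjes integral: if `f` is within `ε` of `c k`
on each partition interval `(t k, t (k+1)]`, then the integral over `(t 0, t m]` is
within `ε * (ν (t m) - ν (t 0))` of the Riemann–Stieltjes sum. -/
lemma stieltjes_approx (ν : StieltjesFunction ℝ) (f : ℝ → ℝ)
    (hf : Measurable f) (m : ℕ) (t : ℕ → ℝ) (ht : ∀ k, t k ≤ t (k + 1))
    (c : ℕ → ℝ) (ε : ℝ) (hε : 0 ≤ ε)
    (hbd : ∀ k < m, ∀ s ∈ Ioc (t k) (t (k + 1)), |f s - c k| ≤ ε) :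
    |(∫ s in Ioc (t 0) (t m), f s ∂ν.measure) -
      ∑ k ∈ Finset.range m, c k * (ν (t (k + 1)) - ν (t k))| ≤ ε * (ν (t m) - ν (t 0)) := by
  have tmono : Monotone t := monotone_nat_of_le_succ ht
  have hνIk : ∀ k, ν.measure (Ioc (t k) (t (k + 1))) = ENNReal.ofReal (ν (t (k + 1)) - ν (t k)) :=
    fun k => ν.measure_Ioc _ _
  have hνIk_lt : ∀ k, ν.measure (Ioc (t k) (t (k + 1))) < ⊤ := by
    intro k; rw [hνIk]; exact ENNReal.ofReal_lt_top
  have hνIk_toReal : ∀ k, (ν.measure (Ioc (t k) (t (k + 1)))).toReal = ν (t (k + 1)) - ν (t k) := by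
    intro k; rw [hνIk, ENNReal.toReal_ofReal (sub_nonneg.2 (ν.mono (ht k)))]
  have hint : ∀ k < m, IntegrableOn f (Ioc (t k) (t (k + 1))) ν.measure := by
    intro k hk
    apply Measure.integrableOn_of_bounded (M := |c k| + ε) (hνIk_lt k).ne
      hf.aestronglyMeasurable
    filter_upwards [ae_restrict_mem measurableSet_Ioc] with s hs
    have := hbd k hk s hs
    rw [Real.norm_eq_abs]
    calc |f s| = |(f s - c k) + c k| := by ring_nf
    _ ≤ |f s - c k| + |c k| := abs_add_le _ _
    _ ≤ |c k| + ε := by linarith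
  have hsplit : ∫ s in Ioc (t 0) (t m), f s ∂ν.measure
      = ∑ k ∈ Finset.range m, ∫ s in Ioc (t k) (t (k + 1)), f s ∂ν.measure := by
    have := intervalIntegral.sum_integral_adjacent_intervals
      (μ := ν.measure) (f := f) (a := t) (n := m) (fun k hk =>
        (intervalIntegrable_iff_integrableOn_Ioc_of_le (ht k)).2 (hint k hk))
    rw [intervalIntegral.integral_of_le (tmono (Nat.zero_le m))] at this
    rw [← this]
    refine Finset.sum_congr rfl fun k _ => ?_
    exact intervalIntegral.integral_of_le (ht k)
  rw [hsplit, ← Finset.sum_sub_distrib]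
  calc |∑ k ∈ Finset.range m, ((∫ s in Ioc (t k) (t (k + 1)), f s ∂ν.measure)
          - c k * (ν (t (k + 1)) - ν (t k)))|
      ≤ ∑ k ∈ Finset.range m, |(∫ s in Ioc (t k) (t (k + 1)), f s ∂ν.measure)
          - c k * (ν (t (k + 1)) - ν (t k))| := Finset.abs_sum_le_sum_abs _ _
    _ ≤ ∑ k ∈ Finset.range m, ε * (ν (t (k + 1)) - ν (t k)) := by
        apply Finset.sum_le_sum
        intro k hk
        have hk' := Finset.mem_range.1 hk
        have hconst : c k * (ν (t (k + 1)) - ν (t k))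
            = ∫ _ in Ioc (t k) (t (k + 1)), c k ∂ν.measure := by
          rw [setIntegral_const, measureReal_def, hνIk_toReal, smul_eq_mul, mul_comm]
        rw [hconst, ← integral_sub (hint k hk')
          (integrableOn_const (hνIk_lt k).ne)]
        calc |∫ s in Ioc (t k) (t (k + 1)), (f s - c k) ∂ν.measure|
            ≤ ε * (ν.measure (Ioc (t k) (t (k + 1)))).toReal := by
              rw [← Real.norm_eq_abs]
              exact norm_setIntegral_le_of_norm_le_const (hνIk_lt k)
                (fun s hs => by rw [Real.norm_eq_abs]; exact hbd k hk' s hs)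
          _ = ε * (ν (t (k + 1)) - ν (t k)) := by rw [hνIk_toReal]
    _ = ε * (ν (t m) - ν (t 0)) := by
        rw [← Finset.mul_sum, Finset.sum_range_sub (fun k => ν (t k))]

/-- Convergence of Lebesgue–Stieltjes integrals with time-changed integrands: if the
nondecreasing right-continuous functions `Fₙ` converge uniformly on `[a,b]` to a
continuous `F` and the time changes `τₙ` converge uniformly on `[a,b]` to the identity,
then `∫_{(a,b]} g(τₙ(s)) dμ_{Fₙ} → ∫_{(a,b]} g(s) dμ_F` for every continuous `g`. -/
theorem stieltjes_integral_convergence_time_change (F : StieltjesFunction ℝ)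
    (Fn : ℕ → StieltjesFunction ℝ) (hF : Continuous F) (a b : ℝ) (hab : a < b)
    (hconv : TendstoUniformlyOn (fun n => (Fn n : ℝ → ℝ)) F atTop (Icc a b))
    (τ : ℕ → ℝ → ℝ) (hτm : ∀ n, Measurable (τ n))
    (hτconv : TendstoUniformlyOn (fun n => τ n) (fun t => t) atTop (Icc a b))
    (g : ℝ → ℝ) (hg : Continuous g) :
    Tendsto (fun n => ∫ s in Ioc a b, g (τ n s) ∂((Fn n).measure)) atTop
      (nhds (∫ s in Ioc a b, g s ∂F.measure)) := by
  rw [Metric.tendsto_nhds]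
  intro ε hε
  set C : ℝ := F b - F a with hCdef
  have hC0 : 0 ≤ C := sub_nonneg.2 (F.mono hab.le)
  set ε₀ : ℝ := ε / (3 * C + 4) with hε₀def
  have hε₀ : 0 < ε₀ := div_pos hε (by linarith)
  have hε₀ε : ε₀ * (3 * C + 4) = ε := div_mul_cancel₀ ε (by linarith)
  -- uniform continuity of g on a compact neighborhood of [a, b]
  set K : Set ℝ := Icc (a - 1) (b + 1) with hKdef
  have hgu : UniformContinuousOn g K :=
    isCompact_Icc.uniformContinuousOn_of_continuous hg.continuousOn
  obtain ⟨δ₁, hδ₁, hδ⟩ := Metric.uniformContinuousOn_iff.1 hgu ε₀ hε₀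
  set δ : ℝ := min δ₁ 1 with hδdef
  have hδ0 : 0 < δ := lt_min hδ₁ one_pos
  have hδle1 : δ ≤ 1 := min_le_right _ _
  have hδleδ₁ : δ ≤ δ₁ := min_le_left _ _
  -- the partition
  set m : ℕ := ⌈(b - a) / δ⌉₊ with hmdef
  have hm : 0 < m := Nat.ceil_pos.2 (div_pos (sub_pos.2 hab) hδ0)
  have hmne : (m : ℝ) ≠ 0 := Nat.cast_ne_zero.2 hm.ne'
  set mesh : ℝ := (b - a) / m with hmeshdef
  have hmesh0 : 0 ≤ mesh := div_nonneg (sub_pos.2 hab).le (Nat.cast_nonneg m)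
  have hmeshδ : mesh ≤ δ := by
    rw [hmeshdef, div_le_iff₀ (by positivity : (0:ℝ) < (m:ℝ))]
    have := Nat.le_ceil ((b - a) / δ)
    calc b - a = ((b - a) / δ) * δ := by field_simp
      _ ≤ (m : ℝ) * δ := by
          apply mul_le_mul_of_nonneg_right _ hδ0.le
          exact_mod_cast this
      _ = δ * m := mul_comm _ _
  set t : ℕ → ℝ := fun k => a + k * mesh with htdef
  have ht : ∀ k, t k ≤ t (k + 1) := by
    intro k
    simp only [htdef]
    push_cast
    nlinarith
  have tmono : Monotone t := monotone_nat_of_le_succ ht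
  have ht0 : t 0 = a := by simp [htdef]
  have htm : t m = b := by
    simp only [htdef, hmeshdef]
    field_simp
    ring
  have htmem : ∀ k ≤ m, t k ∈ Icc a b := by
    intro k hk
    constructor
    · rw [← ht0]; exact tmono (Nat.zero_le k)
    · rw [← htm]; exact tmono hk
  have hIccK : Icc a b ⊆ K := Icc_subset_Icc (by linarith) (by linarith)
  have hIocmem : ∀ k < m, ∀ s ∈ Ioc (t k) (t (k + 1)), s ∈ Icc a b := by
    intro k hk s hs
    have h0 : a ≤ t k := by rw [← ht0]; exact tmono (Nat.zero_le k)
    have h1 : t (k + 1) ≤ b := by rw [← htm]; exact tmono hk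
    exact ⟨h0.trans hs.1.le, hs.2.trans h1⟩
  -- closeness of s to the right endpoint
  have hclose : ∀ k < m, ∀ s ∈ Ioc (t k) (t (k + 1)), dist s (t (k + 1)) < δ := by
    intro k hk s hs
    rw [Real.dist_eq, abs_sub_comm, abs_of_nonneg (sub_nonneg.2 hs.2)]
    have : t (k + 1) - t k = mesh := by simp [htdef]; push_cast; ring
    calc t (k + 1) - s < t (k + 1) - t k := by linarith [hs.1]
      _ = mesh := this
      _ ≤ δ := hmeshδ
  -- the Riemann–Stieltjes sums
  set S : ℝ := ∑ k ∈ Finset.range m, g (t (k + 1)) * (F (t (k + 1)) - F (t k)) with hSdef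
  -- bound for the limit integral
  have hbase : |(∫ s in Ioc a b, g s ∂F.measure) - S| ≤ ε₀ * C := by
    have := stieltjes_approx F g hg.measurable m t ht (fun k => g (t (k + 1))) ε₀ hε₀.le ?_
    · rw [ht0, htm] at this
      exact this
    · intro k hk s hs
      rw [← Real.dist_eq]
      exact (hδ s (hIccK (hIocmem k hk s hs)) (t (k + 1))
        (hIccK (htmem (k + 1) hk)) ((hclose k hk s hs).trans_le hδleδ₁)).le
  -- eventual bounds
  have hSn : Tendsto (fun n => ∑ k ∈ Finset.range m,
      g (t (k + 1)) * (Fn n (t (k + 1)) - Fn n (t k))) atTop (nhds S) := by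
    apply tendsto_finset_sum
    intro k hk
    have hk' := Finset.mem_range.1 hk
    exact (((hconv.tendsto_at (htmem (k + 1) hk')).sub
      (hconv.tendsto_at (htmem k hk'.le))).const_mul _)
  have E3 : ∀ᶠ n in atTop, |(∑ k ∈ Finset.range m,
      g (t (k + 1)) * (Fn n (t (k + 1)) - Fn n (t k))) - S| < ε₀ := by
    have := Metric.tendsto_nhds.1 hSn ε₀ hε₀
    filter_upwards [this] with n hn
    rwa [Real.dist_eq] at hn
  have E2 : ∀ᶠ n in atTop, Fn n b - Fn n a ≤ C + 1 := by
    have : Tendsto (fun n => Fn n b - Fn n a) atTop (nhds C) :=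
      (hconv.tendsto_at (right_mem_Icc.2 hab.le)).sub
        (hconv.tendsto_at (left_mem_Icc.2 hab.le))
    exact this.eventually (eventually_le_nhds (by linarith))
  have E1 : ∀ᶠ n in atTop, ∀ s ∈ Icc a b, dist (τ n s) s < δ := by
    have := Metric.tendstoUniformlyOn_iff.1 hτconv δ hδ0
    filter_upwards [this] with n hn s hs
    have := hn s hs
    rwa [dist_comm] at this
  filter_upwards [E1, E2, E3] with n h1 h2 h3
  -- bound for the n-th integral
  have hn : |(∫ s in Ioc a b, g (τ n s) ∂(Fn n).measure) - ∑ k ∈ Finset.range m,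
      g (t (k + 1)) * (Fn n (t (k + 1)) - Fn n (t k))| ≤ (2 * ε₀) * (Fn n b - Fn n a) := by
    have := stieltjes_approx (Fn n) (fun s => g (τ n s))
      (hg.measurable.comp (hτm n)) m t ht (fun k => g (t (k + 1))) (2 * ε₀)
      (by linarith) ?_
    · rw [ht0, htm] at this
      exact this
    · intro k hk s hs
      have hsab := hIocmem k hk s hs
      have hτs : dist (τ n s) s < δ := h1 s hsab
      have hτsK : τ n s ∈ K := by
        rw [Real.dist_eq] at hτs
        obtain ⟨hl, hr⟩ := abs_lt.1 hτs
        simp only [hKdef, mem_Icc]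
        constructor
        · linarith [hsab.1]
        · linarith [hsab.2]
      calc |g (τ n s) - g (t (k + 1))|
          ≤ |g (τ n s) - g s| + |g s - g (t (k + 1))| := abs_sub_le _ _ _
        _ ≤ ε₀ + ε₀ := by
            gcongr
            · rw [← Real.dist_eq]
              exact (hδ (τ n s) hτsK s (hIccK hsab) (hτs.trans_le hδleδ₁)).le
            · rw [← Real.dist_eq]
              exact (hδ s (hIccK hsab) (t (k + 1)) (hIccK (htmem (k + 1) hk))
                ((hclose k hk s hs).trans_le hδleδ₁)).le
        _ = 2 * ε₀ := by ring
  have hFn0 : 0 ≤ Fn n b - Fn n a := sub_nonneg.2 ((Fn n).mono hab.le)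
  rw [Real.dist_eq]
  calc |(∫ s in Ioc a b, g (τ n s) ∂(Fn n).measure) - ∫ s in Ioc a b, g s ∂F.measure|
      ≤ |(∫ s in Ioc a b, g (τ n s) ∂(Fn n).measure) - ∑ k ∈ Finset.range m,
          g (t (k + 1)) * (Fn n (t (k + 1)) - Fn n (t k))|
        + |(∑ k ∈ Finset.range m, g (t (k + 1)) * (Fn n (t (k + 1)) - Fn n (t k))) - S|
        + |S - ∫ s in Ioc a b, g s ∂F.measure| := by
          have := abs_sub_le (∫ s in Ioc a b, g (τ n s) ∂(Fn n).measure)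
            (∑ k ∈ Finset.range m, g (t (k + 1)) * (Fn n (t (k + 1)) - Fn n (t k)))
            (∫ s in Ioc a b, g s ∂F.measure)
          have h2' := abs_sub_le (∑ k ∈ Finset.range m,
            g (t (k + 1)) * (Fn n (t (k + 1)) - Fn n (t k))) S
            (∫ s in Ioc a b, g s ∂F.measure)
          linarith
    _ < ε := by
        rw [abs_sub_comm] at hbase
        have := mul_le_mul_of_nonneg_left h2 (by linarith : (0:ℝ) ≤ 2 * ε₀)
        nlinarith [hn, h3, hbase]
end

section
/- Change of variables for atomless Stieltjes primitives: Let μ be a Borel measure on [0,∞) with no atoms that is finite on compact sets, let a : [0,∞) → [0,∞) be measurable and μ-integrable on compact sets, and set F(s) := ∫_{[0,s]} a dμ. Then for every continuous g : ℝ → ℝ and every t ≥ 0, ∫_{[0,t]} g(F(s))·a(s) μ(ds) = ∫_0^{F(t)} g(r) dr. -/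
open MeasureTheory Set Filter Topology
open scoped ENNReal NNReal

lemma monotone_continuousAt_of_seq {f : ℝ → ℝ} (hf : Monotone f) (x : ℝ)
    (hr : Tendsto (fun n : ℕ => f (x + 1/(n+1))) atTop (𝓝 (f x)))
    (hl : Tendsto (fun n : ℕ => f (x - 1/(n+1))) atTop (𝓝 (f x))) :
    ContinuousAt f x := by
  rw [Metric.continuousAt_iff]
  intro ε hε
  have h1 : ∀ᶠ n : ℕ in atTop, f (x + 1/(n+1)) < f x + ε :=
    hr.eventually (eventually_lt_nhds (by linarith : f x < f x + ε))
  have h2 : ∀ᶠ n : ℕ in atTop, f x - ε < f (x - 1/(n+1)) :=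
    hl.eventually (eventually_gt_nhds (by linarith : f x - ε < f x))
  obtain ⟨n, hn1, hn2⟩ := (h1.and h2).exists
  refine ⟨1/(n+1), by positivity, fun {y} hy => ?_⟩
  rw [Real.dist_eq] at hy ⊢
  rw [abs_sub_lt_iff] at hy ⊢
  have hy1 : y ≤ x + 1/(n+1) := by linarith [hy.1]
  have hy2 : x - 1/(n+1) ≤ y := by linarith [hy.2]
  exact ⟨by linarith [hf hy1], by linarith [hf hy2]⟩

/-- Change of variables for atomless Stieltjes primitives: if `F(s) = ∫_{[0,s]} a dμ` with
`μ` atomless, finite on compacts and supported on `[0,∞)`, and `a ≥ 0` is locally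
`μ`-integrable, then `∫_{[0,t]} g(F(s))·a(s) μ(ds) = ∫_0^{F(t)} g(r) dr` for every
continuous `g` and every `t ≥ 0`. -/
theorem atomless_stieltjes_change_of_variables (μ : Measure ℝ) [NullSingletonClass μ]
    [IsFiniteMeasureOnCompacts μ] (hμsupp : μ (Iio (0:ℝ)) = 0)
    (a : ℝ → ℝ) (ham : Measurable a) (ha0 : ∀ t, 0 ≤ a t)
    (haint : ∀ t : ℝ, 0 ≤ t → IntegrableOn a (Icc (0:ℝ) t) μ)
    (F : ℝ → ℝ) (hF : ∀ s, F s = ∫ r in Icc (0:ℝ) s, a r ∂μ)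
    (g : ℝ → ℝ) (hg : Continuous g) :
    ∀ t : ℝ, 0 ≤ t →
      (∫ s in Icc (0:ℝ) t, g (F s) * a s ∂μ) = ∫ r in (0:ℝ)..(F t), g r := by
  intro t ht
  set ν : Measure ℝ := μ.withDensity (fun x => ENNReal.ofReal (a x)) with hνdef
  have hνac : ν ≪ μ := withDensity_absolutelyContinuous μ _
  have hν0 : ν (Iio (0:ℝ)) = 0 := hνac hμsupp
  have hνsing : ∀ x : ℝ, ν {x} = 0 := fun x => hνac (measure_singleton x)
  have hF0 : ∀ s, 0 ≤ F s := fun s => by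
    rw [hF s]; exact setIntegral_nonneg measurableSet_Icc (fun x _ => ha0 x)
  have hνIcc : ∀ s : ℝ, 0 ≤ s → ν (Icc 0 s) = ENNReal.ofReal (F s) := by
    intro s hs
    rw [hνdef, withDensity_apply _ measurableSet_Icc, hF s,
      ofReal_integral_eq_lintegral_ofReal (haint s hs)
        (Filter.Eventually.of_forall (fun x => ha0 x))]
  have hνIic : ∀ s : ℝ, ν (Iic s) = ENNReal.ofReal (F s) := by
    intro s
    rcases le_or_gt 0 s with hs | hs
    · have hun : Iic s = Iio 0 ∪ Icc 0 s := by
        ext x; simp only [mem_Iic, mem_union, mem_Iio, mem_Icc]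
        constructor
        · intro h; rcases lt_or_ge x 0 with h' | h'; exacts [Or.inl h', Or.inr ⟨h', h⟩]
        · rintro (h | h); exacts [le_trans h.le hs, h.2]
      have hm : ν (Iio 0 ∪ Icc 0 s) = ν (Icc 0 s) :=
        le_antisymm (by simpa [hν0] using measure_union_le (μ := ν) (Iio 0) (Icc 0 s))
          (measure_mono subset_union_right)
      rw [hun, hm, hνIcc s hs]
    · have h1 : ν (Iic s) = 0 :=
        measure_mono_null (fun x hx => lt_of_le_of_lt hx hs) hν0
      have h2 : F s = 0 := by
        rw [hF s, Icc_eq_empty (not_le.2 hs), Measure.restrict_empty, integral_zero_measure]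
      rw [h1, h2, ENNReal.ofReal_zero]
  have hfin : ∀ s : ℝ, ν (Iic s) ≠ ⊤ := fun s => by
    rw [hνIic]; exact ENNReal.ofReal_ne_top
  have hFeq : ∀ s, F s = (ν (Iic s)).toReal := fun s => by
    rw [hνIic, ENNReal.toReal_ofReal (hF0 s)]
  have hmono : Monotone F := by
    intro x y hxy; rw [hFeq x, hFeq y]
    exact ENNReal.toReal_mono (hfin y) (measure_mono (Iic_subset_Iic.2 hxy))
  have hIocfin : ∀ x y : ℝ, ν (Ioc x y) ≠ ⊤ := fun x y =>
    (lt_of_le_of_lt (measure_mono Ioc_subset_Iic_self) (hfin y).lt_top).ne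
  have hdiff : ∀ x y : ℝ, x ≤ y → F y = F x + (ν (Ioc x y)).toReal := by
    intro x y hxy
    have hun : Iic y = Iic x ∪ Ioc x y := (Iic_union_Ioc_eq_Iic hxy).symm
    rw [hFeq y, hFeq x, hun, measure_union (Iic_disjoint_Ioc le_rfl) measurableSet_Ioc,
      ENNReal.toReal_add (hfin x) (hIocfin x y)]
  have hcont : Continuous F := by
    rw [continuous_iff_continuousAt]
    intro x
    apply monotone_continuousAt_of_seq hmono
    · have hx : ∀ n : ℕ, F (x + 1/(n+1)) = F x + (ν (Ioc x (x + 1/((n:ℝ)+1)))).toReal :=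
        fun n => hdiff x _ (le_add_of_nonneg_right (by positivity))
      have hten : Tendsto (fun n : ℕ => ν (Ioc x (x + 1/((n:ℝ)+1)))) atTop
          (𝓝 (ν (⋂ n : ℕ, Ioc x (x + 1/((n:ℝ)+1))))) :=
        tendsto_measure_iInter_atTop (fun n => measurableSet_Ioc.nullMeasurableSet)
          (fun m n hmn => Ioc_subset_Ioc_right (by
            have : (1:ℝ)/((n:ℝ)+1) ≤ 1/((m:ℝ)+1) := by
              exact one_div_le_one_div_of_le (by positivity)
                (by linarith [(Nat.cast_le (α := ℝ)).mpr hmn])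
            linarith)) ⟨0, hIocfin _ _⟩
      have hempty : (⋂ n : ℕ, Ioc x (x + 1/((n:ℝ)+1))) = ∅ := by
        ext y; simp only [mem_iInter, mem_Ioc, mem_empty_iff_false, iff_false]
        intro h
        obtain ⟨n, hn⟩ := exists_nat_one_div_lt (show (0:ℝ) < y - x from sub_pos.2 (h 0).1)
        have := (h n).2
        linarith
      rw [hempty, measure_empty] at hten
      have htoR : Tendsto (fun n : ℕ => (ν (Ioc x (x + 1/((n:ℝ)+1)))).toReal) atTop (𝓝 0) := by
        have := (ENNReal.tendsto_toReal (by simp : (0:ℝ≥0∞) ≠ ⊤)).comp hten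
        exact this
      have hfin2 : Tendsto (fun n : ℕ => F x + (ν (Ioc x (x + 1/((n:ℝ)+1)))).toReal)
          atTop (𝓝 (F x + 0)) := Tendsto.add tendsto_const_nhds htoR
      simp_rw [hx]
      simpa using hfin2
    · have hx : ∀ n : ℕ, F (x - 1/((n:ℝ)+1)) = F x - (ν (Ioc (x - 1/((n:ℝ)+1)) x)).toReal :=
        fun n => by
          have := hdiff (x - 1/((n:ℝ)+1)) x (by
            have : (0:ℝ) < 1/((n:ℝ)+1) := by positivity
            linarith)
          linarith
      have hten : Tendsto (fun n : ℕ => ν (Ioc (x - 1/((n:ℝ)+1)) x)) atTop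
          (𝓝 (ν (⋂ n : ℕ, Ioc (x - 1/((n:ℝ)+1)) x))) :=
        tendsto_measure_iInter_atTop (fun n => measurableSet_Ioc.nullMeasurableSet)
          (fun m n hmn => Ioc_subset_Ioc_left (by
            have : (1:ℝ)/((n:ℝ)+1) ≤ 1/((m:ℝ)+1) := by
              exact one_div_le_one_div_of_le (by positivity)
                (by linarith [(Nat.cast_le (α := ℝ)).mpr hmn])
            linarith)) ⟨0, hIocfin _ _⟩
      have hsingl : (⋂ n : ℕ, Ioc (x - 1/((n:ℝ)+1)) x) = {x} := by
        ext y; simp only [mem_iInter, mem_Ioc, mem_singleton_iff]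
        constructor
        · intro h
          refine le_antisymm (h 0).2 (le_of_not_gt fun hy => ?_)
          obtain ⟨n, hn⟩ := exists_nat_one_div_lt (show (0:ℝ) < x - y from sub_pos.2 hy)
          have := (h n).1
          linarith
        · rintro rfl
          exact fun n => ⟨sub_lt_self _ (by positivity), le_rfl⟩
      rw [hsingl, hνsing x] at hten
      have htoR : Tendsto (fun n : ℕ => (ν (Ioc (x - 1/((n:ℝ)+1)) x)).toReal) atTop (𝓝 0) := by
        have := (ENNReal.tendsto_toReal (by simp : (0:ℝ≥0∞) ≠ ⊤)).comp hten
        exact this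
      have hfin2 : Tendsto (fun n : ℕ => F x - (ν (Ioc (x - 1/((n:ℝ)+1)) x)).toReal)
          atTop (𝓝 (F x - 0)) := Tendsto.sub tendsto_const_nhds htoR
      simp_rw [hx]
      simpa using hfin2
  have hFmeas : Measurable F := hmono.measurable
  have hF00 : F 0 = 0 := by
    have : ν (Iic 0) = 0 := by
      have h := measure_union_le (μ := ν) (Iio 0) {0}
      rw [hν0, hνsing 0, add_zero] at h
      have hsub : Iic (0:ℝ) ⊆ Iio 0 ∪ {0} := fun y hy => by
        rcases lt_or_eq_of_le (mem_Iic.1 hy) with h' | h'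
        · exact Or.inl h'
        · exact Or.inr h'
      exact le_antisymm (le_trans (measure_mono hsub) h) zero_le
    rw [hFeq 0, this, ENNReal.toReal_zero]
  set ν' : Measure ℝ := ν.restrict (Icc 0 t) with hν'def
  haveI hν'fin : IsFiniteMeasure ν' := by
    constructor
    rw [hν'def, Measure.restrict_apply_univ]
    exact lt_of_le_of_lt (measure_mono Icc_subset_Iic_self) (hfin t).lt_top
  haveI hmapfin : IsFiniteMeasure (ν'.map F) := by
    constructor
    rw [Measure.map_apply hFmeas MeasurableSet.univ, preimage_univ]
    exact measure_lt_top ν' _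
  have hmap : ν'.map F = volume.restrict (Icc 0 (F t)) := by
    refine Measure.ext_of_Iic (ν'.map F) _ (fun c => ?_)
    rw [Measure.map_apply hFmeas measurableSet_Iic, hν'def,
      Measure.restrict_apply (hFmeas measurableSet_Iic),
      Measure.restrict_apply measurableSet_Iic]
    rcases lt_or_ge c 0 with hc | hc
    · have h1 : F ⁻¹' (Iic c) = ∅ := by
        ext s; simp only [mem_preimage, mem_Iic, mem_empty_iff_false, iff_false, not_le]
        exact lt_of_lt_of_le hc (hF0 s)
      have h2 : Iic c ∩ Icc 0 (F t) = ∅ := by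
        ext y; simp only [mem_inter_iff, mem_Iic, mem_Icc, mem_empty_iff_false, iff_false]
        rintro ⟨hy1, hy2, -⟩; linarith
      simp [h1, h2]
    rcases le_or_gt (F t) c with hc2 | hc2
    · have h1 : F ⁻¹' (Iic c) ∩ Icc 0 t = Icc 0 t := by
        apply inter_eq_right.2
        intro s hs
        exact le_trans (hmono hs.2) hc2
      have h2 : Iic c ∩ Icc 0 (F t) = Icc 0 (F t) := by
        apply inter_eq_right.2
        intro y hy
        exact le_trans hy.2 hc2
      rw [h1, h2, hνIcc t ht, Real.volume_Icc, sub_zero]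
    · set S := Icc 0 t ∩ F ⁻¹' (Iic c) with hSdef
      have hS0 : (0:ℝ) ∈ S := ⟨⟨le_rfl, ht⟩, by simp only [mem_preimage, mem_Iic, hF00]; exact hc⟩
      have hSbdd : BddAbove S := ⟨t, fun s hs => hs.1.2⟩
      set sc := sSup S with hscdef
      have hScl : IsClosed S := isClosed_Icc.inter (isClosed_Iic.preimage hcont)
      have hmem : sc ∈ S := hScl.csSup_mem ⟨0, hS0⟩ hSbdd
      have hsc1 : F sc ≤ c := hmem.2
      have hsc2 : c ≤ F sc := by
        have hseq : Tendsto (fun n : ℕ => F (sc + 1/((n:ℝ)+1))) atTop (𝓝 (F sc)) := by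
          apply (hcont.continuousAt).tendsto.comp
          have : Tendsto (fun n : ℕ => sc + 1/((n:ℝ)+1)) atTop (𝓝 (sc + 0)) :=
            tendsto_const_nhds.add tendsto_one_div_add_atTop_nhds_zero_nat
          simpa using this
        refine ge_of_tendsto hseq (Filter.Eventually.of_forall fun n => ?_)
        set u := sc + 1/((n:ℝ)+1) with hu
        have hu0 : (0:ℝ) < 1/((n:ℝ)+1) := by positivity
        rcases le_or_gt u t with hut | hut
        · by_contra hlt
          push_neg at hlt
          have : u ∈ S := ⟨⟨by have := hmem.1.1; simp only [hu]; linarith, hut⟩, Set.mem_preimage.2 (mem_Iic.2 hlt.le)⟩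
          have := le_csSup hSbdd this
          simp only [hu] at this
          linarith
        · exact le_trans hc2.le (hmono hut.le)
      have hFsc : F sc = c := le_antisymm hsc1 hsc2
      have h1 : F ⁻¹' (Iic c) ∩ Icc 0 t = Icc 0 sc := by
        ext s
        simp only [mem_inter_iff, mem_preimage, mem_Iic, mem_Icc]
        constructor
        · rintro ⟨hFs, hs0, hst⟩
          exact ⟨hs0, le_csSup hSbdd ⟨⟨hs0, hst⟩, hFs⟩⟩
        · rintro ⟨hs0, hssc⟩
          exact ⟨le_trans (hmono hssc) hsc1, hs0, le_trans hssc hmem.1.2⟩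
      have h2 : Iic c ∩ Icc 0 (F t) = Icc 0 c := by
        ext y
        simp only [mem_inter_iff, mem_Iic, mem_Icc]
        constructor
        · rintro ⟨hy1, hy2, -⟩; exact ⟨hy2, hy1⟩
        · rintro ⟨hy1, hy2⟩; exact ⟨hy2, hy1, le_trans hy2 hc2.le⟩
      rw [h1, h2, hνIcc sc hmem.1.1, hFsc, Real.volume_Icc, sub_zero]
  have h1 : ∫ s in Icc (0:ℝ) t, g (F s) * a s ∂μ = ∫ s, g (F s) ∂ν' := by
    rw [hν'def, hνdef, restrict_withDensity measurableSet_Icc]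
    have heq : (fun x => ENNReal.ofReal (a x)) = (fun x => ((fun y => (a y).toNNReal) x : ℝ≥0∞)) := rfl
    rw [heq, integral_withDensity_eq_integral_smul ham.real_toNNReal (fun x => g (F x))]
    apply integral_congr_ae
    filter_upwards with x
    rw [NNReal.smul_def, smul_eq_mul, Real.coe_toNNReal _ (ha0 x), mul_comm]
  have h2 : ∫ s, g (F s) ∂ν' = ∫ r, g r ∂(ν'.map F) :=
    (integral_map hFmeas.aemeasurable hg.aestronglyMeasurable).symm
  rw [h1, h2, hmap, intervalIntegral.integral_of_le (hF0 t), ← integral_Icc_eq_integral_Ioc]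
end
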